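/- arXiv:1401.2279 — 6 statements merged into one kernel-verified Lean document; each statement's English description precedes it below -/
import Mathlib

section
/- Let (M,d,μ) be a metric measure space satisfying the doubling volume property, let m > 1 and c > 0. Then there exists a constant C > 0 such that for every y ∈ M, every t > 0 and every r ≥ 0, ∫_{M∖B(y,r)} exp(−c (d(x,y)^m / t)^{1/(m-1)}) dμ(x) ≤ C exp(−(c/2) (r^m / t)^{1/(m-1)}) · V(y, t^{1/m}). -/
open MeasureTheory Metric Set

/-- On a doubling metric measure space, for `m > 1` and `c > 0`, the integral of the
sub-Gaussian weight `exp(−c (d(x,y)^m/t)^{1/(m-1)})` over the complement of `B(y,r)` is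
bounded by `C exp(−(c/2)(r^m/t)^{1/(m-1)}) V(y, t^{1/m})`. -/
theorem weighted_subGaussian_integral_estimate
    {M : Type*} [MetricSpace M] [MeasurableSpace M] [BorelSpace M] (μ : Measure M)
    (hpos : ∀ (x : M) (r : ℝ), 0 < r → 0 < μ (ball x r))
    (hfin : ∀ (x : M) (r : ℝ), 0 < r → μ (ball x r) < ⊤)
    (C_D : ℝ) (hC_D : 0 < C_D)
    (hdoub : ∀ (x : M) (r : ℝ), 0 < r →
      μ (ball x (2 * r)) ≤ ENNReal.ofReal C_D * μ (ball x r))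
    (m c : ℝ) (hm : 1 < m) (hc : 0 < c) :
    ∃ C > (0 : ℝ), ∀ (y : M) (t r : ℝ), 0 < t → 0 ≤ r →
      ∫⁻ x in (ball y r)ᶜ,
          ENNReal.ofReal (Real.exp (-c * (dist x y ^ m / t) ^ (1 / (m - 1)))) ∂μ
        ≤ ENNReal.ofReal (C * Real.exp (-(c / 2) * (r ^ m / t) ^ (1 / (m - 1)))) *
            μ (ball y (t ^ (1 / m))) := by
  have hm1 : (0:ℝ) < m - 1 := by linarith
  have hm0 : (0:ℝ) < m := by linarith
  have hα : (0:ℝ) < 1 / (m - 1) := by positivity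
  set β : ℝ := m * (1 / (m - 1)) with hβdef
  have hβ1 : 1 < β := by
    rw [hβdef, show m * (1 / (m - 1)) = m / (m - 1) by ring, lt_div_iff₀ hm1]
    linarith
  set C' : ℝ := max C_D 1 with hC'def
  have hC'1 : (1:ℝ) ≤ C' := le_max_right _ _
  have hC'0 : (0:ℝ) < C' := lt_of_lt_of_le one_pos hC'1
  set a : ℕ → ℝ := fun k => C' ^ (k + 1) * Real.exp (-(c / 2) * (k : ℝ) ^ β) with hadef
  have ha_nonneg : ∀ k, 0 ≤ a k := fun k => by positivity
  -- summability of the series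
  have hsum : Summable a := by
    apply Summable.of_norm_bounded_eventually_nat (g := fun k => C' * Real.exp (-1) ^ k)
    · exact (summable_geometric_of_lt_one (Real.exp_nonneg _)
        (Real.exp_lt_one_iff.mpr (by norm_num))).mul_left _
    · have htend : Filter.Tendsto (fun k : ℕ => (c / 2) * (k : ℝ) ^ (β - 1))
          Filter.atTop Filter.atTop := by
        apply Filter.Tendsto.const_mul_atTop (by positivity)
        exact (tendsto_rpow_atTop (by linarith)).comp tendsto_natCast_atTop_atTop
      filter_upwards [htend.eventually_ge_atTop (Real.log C' + 1),
        Filter.eventually_ge_atTop 1] with k hk hk1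
      have hk0 : (0:ℝ) < (k:ℝ) := by exact_mod_cast hk1
      rw [Real.norm_eq_abs, abs_of_nonneg (ha_nonneg k)]
      have hkβ : (k:ℝ) ^ β = (k:ℝ) * (k:ℝ) ^ (β - 1) := by
        rw [show β = 1 + (β - 1) by ring, Real.rpow_add hk0, Real.rpow_one]
        ring_nf
      have h1 : (k:ℝ) * (Real.log C' + 1) ≤ (c / 2) * (k:ℝ) ^ β := by
        rw [hkβ]
        calc (k:ℝ) * (Real.log C' + 1) ≤ (k:ℝ) * ((c / 2) * (k:ℝ) ^ (β - 1)) :=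
              mul_le_mul_of_nonneg_left hk hk0.le
          _ = (c / 2) * ((k:ℝ) * (k:ℝ) ^ (β - 1)) := by ring
      have hCk : C' ^ k = Real.exp ((k:ℝ) * Real.log C') := by
        rw [Real.exp_nat_mul, Real.exp_log hC'0]
      have hek : Real.exp (-1) ^ k = Real.exp (-(k:ℝ)) := by
        rw [← Real.exp_nat_mul]; ring_nf
      rw [hadef]
      simp only
      rw [pow_succ, mul_comm (C' ^ k) C', mul_assoc, hek, hCk, ← Real.exp_add]
      apply mul_le_mul_of_nonneg_left _ hC'0.le
      apply Real.exp_le_exp.mpr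
      linarith
  have hS0 : 0 ≤ ∑' k, a k := tsum_nonneg ha_nonneg
  refine ⟨1 + ∑' k, a k, by linarith, ?_⟩
  intro y t r ht hr
  set s : ℝ := t ^ (1 / m) with hsdef
  have hs : 0 < s := Real.rpow_pos_of_pos ht _
  have hsm : s ^ m = t := by
    rw [hsdef, ← Real.rpow_mul ht.le, one_div_mul_cancel (ne_of_gt hm0), Real.rpow_one]
  set Er : ℝ := Real.exp (-(c / 2) * (r ^ m / t) ^ (1 / (m - 1))) with hErdef
  have hEr0 : 0 < Er := Real.exp_pos _
  set S : ℕ → Set M := fun k => ((ball y r)ᶜ ∩ ball y (((k : ℝ) + 1) * s)) \ ball y ((k : ℝ) * s)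
    with hSdef
  have hcover : (ball y r)ᶜ ⊆ ⋃ k, S k := by
    intro x hx
    refine mem_iUnion.mpr ⟨⌊dist x y / s⌋₊, ⟨hx, ?_⟩, ?_⟩
    · have h1 : dist x y / s < (⌊dist x y / s⌋₊ : ℝ) + 1 := Nat.lt_floor_add_one _
      exact mem_ball.mpr ((div_lt_iff₀ hs).mp h1)
    · intro hmem
      have h2 : (⌊dist x y / s⌋₊ : ℝ) ≤ dist x y / s := Nat.floor_le (by positivity)
      have h3 := mem_ball.mp hmem
      have h4 : (⌊dist x y / s⌋₊ : ℝ) * s ≤ dist x y := (le_div_iff₀ hs).mp h2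
      linarith
  -- iterated doubling
  have hiter : ∀ j : ℕ, μ (ball y (2 ^ j * s)) ≤ ENNReal.ofReal (C' ^ j) * μ (ball y s) := by
    intro j
    induction j with
    | zero => simp
    | succ j ih =>
      have h2 : (2:ℝ) ^ (j+1) * s = 2 * (2 ^ j * s) := by ring
      calc μ (ball y ((2:ℝ) ^ (j+1) * s)) = μ (ball y (2 * ((2:ℝ) ^ j * s))) := by rw [h2]
        _ ≤ ENNReal.ofReal C_D * μ (ball y ((2:ℝ) ^ j * s)) := hdoub _ _ (by positivity)
        _ ≤ ENNReal.ofReal C' * (ENNReal.ofReal (C' ^ j) * μ (ball y s)) :=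
            mul_le_mul' (ENNReal.ofReal_le_ofReal (le_max_left _ _)) ih
        _ = ENNReal.ofReal (C' ^ (j+1)) * μ (ball y s) := by
            rw [← mul_assoc, ← ENNReal.ofReal_mul hC'0.le, ← pow_succ']
  have hmeas : ∀ k : ℕ, μ (S k) ≤ ENNReal.ofReal (C' ^ (k+1)) * μ (ball y s) := by
    intro k
    calc μ (S k) ≤ μ (ball y ((2:ℝ) ^ (k+1) * s)) := by
          apply measure_mono
          intro x hx
          obtain ⟨⟨-, hx2⟩, -⟩ := hx
          refine mem_ball.mpr (lt_of_lt_of_le (mem_ball.mp hx2) ?_)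
          have hkk : ((k:ℝ) + 1) ≤ (2:ℝ) ^ (k+1) := by
            have := Nat.lt_two_pow_self (n := k+1)
            exact_mod_cast this.le
          exact mul_le_mul_of_nonneg_right hkk hs.le
      _ ≤ ENNReal.ofReal (C' ^ (k+1)) * μ (ball y s) := hiter (k+1)
  -- pointwise bound on each annulus
  have hpt : ∀ k : ℕ, ∀ x ∈ S k,
      Real.exp (-c * (dist x y ^ m / t) ^ (1 / (m - 1)))
        ≤ Er * Real.exp (-(c/2) * (k:ℝ) ^ β) := by
    intro k x hx
    obtain ⟨⟨hx1, -⟩, hx3⟩ := hx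
    simp only [mem_compl_iff, mem_ball, not_lt] at hx1 hx3
    have hd0 : (0:ℝ) ≤ dist x y := dist_nonneg
    have hA : (r ^ m / t) ^ (1/(m-1)) ≤ (dist x y ^ m / t) ^ (1/(m-1)) := by
      apply Real.rpow_le_rpow (by positivity) _ hα.le
      exact div_le_div_of_nonneg_right (Real.rpow_le_rpow hr hx1 hm0.le) ht.le
    have hB : (k:ℝ) ^ β ≤ (dist x y ^ m / t) ^ (1/(m-1)) := by
      have h1 : ((k:ℝ) * s) ^ m / t = ((k:ℝ) ^ m) := by
        rw [Real.mul_rpow (Nat.cast_nonneg k) hs.le, hsm, mul_div_assoc,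
          div_self (ne_of_gt ht), mul_one]
      have h2 : (k:ℝ) ^ β = (((k:ℝ) * s) ^ m / t) ^ (1/(m-1)) := by
        rw [h1, hβdef, Real.rpow_mul (Nat.cast_nonneg k)]
      rw [h2]
      apply Real.rpow_le_rpow (by positivity) _ hα.le
      have : ((k:ℝ) * s) ^ m ≤ dist x y ^ m :=
        Real.rpow_le_rpow (by positivity) hx3 hm0.le
      exact div_le_div_of_nonneg_right this ht.le
    rw [hErdef, ← Real.exp_add]
    apply Real.exp_le_exp.mpr
    nlinarith [hA, hB, hc]
  have hSk : ∀ k : ℕ,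
      (∫⁻ x in S k,
        ENNReal.ofReal (Real.exp (-c * (dist x y ^ m / t) ^ (1 / (m - 1)))) ∂μ)
      ≤ ENNReal.ofReal (Er * a k) * μ (ball y s) := by
    intro k
    calc ∫⁻ x in S k,
          ENNReal.ofReal (Real.exp (-c * (dist x y ^ m / t) ^ (1 / (m - 1)))) ∂μ
        ≤ ∫⁻ _x in S k, ENNReal.ofReal (Er * Real.exp (-(c/2) * (k:ℝ)^β)) ∂μ := by
          apply setLIntegral_mono measurable_const
          intro x hx
          exact ENNReal.ofReal_le_ofReal (hpt k x hx)
      _ = ENNReal.ofReal (Er * Real.exp (-(c/2) * (k:ℝ)^β)) * μ (S k) :=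
          setLIntegral_const _ _
      _ ≤ ENNReal.ofReal (Er * Real.exp (-(c/2) * (k:ℝ)^β)) *
            (ENNReal.ofReal (C' ^ (k+1)) * μ (ball y s)) := mul_le_mul_right (hmeas k) _
      _ = ENNReal.ofReal (Er * a k) * μ (ball y s) := by
          have hre : Er * Real.exp (-(c/2) * (k:ℝ)^β) * C' ^ (k+1) = Er * a k := by
            rw [hadef]; ring
          rw [← mul_assoc, ← ENNReal.ofReal_mul (by positivity), hre]
  calc ∫⁻ x in (ball y r)ᶜ,
        ENNReal.ofReal (Real.exp (-c * (dist x y ^ m / t) ^ (1 / (m - 1)))) ∂μ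
      ≤ ∫⁻ x in ⋃ k, S k,
          ENNReal.ofReal (Real.exp (-c * (dist x y ^ m / t) ^ (1 / (m - 1)))) ∂μ :=
        lintegral_mono_set hcover
    _ ≤ ∑' k, ∫⁻ x in S k,
          ENNReal.ofReal (Real.exp (-c * (dist x y ^ m / t) ^ (1 / (m - 1)))) ∂μ :=
        lintegral_iUnion_le _ _
    _ ≤ ∑' k, ENNReal.ofReal (Er * a k) * μ (ball y s) := ENNReal.tsum_le_tsum hSk
    _ = (∑' k, ENNReal.ofReal (Er * a k)) * μ (ball y s) := ENNReal.tsum_mul_right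
    _ ≤ ENNReal.ofReal ((1 + ∑' k, a k) * Er) * μ (ball y s) := by
        apply mul_le_mul_left
        rw [← ENNReal.ofReal_tsum_of_nonneg (fun k => by positivity) (hsum.mul_left Er)]
        apply ENNReal.ofReal_le_ofReal
        rw [tsum_mul_left]
        nlinarith [hS0, hEr0.le]
end

section
/- Let (M,d,μ) be a metric measure space satisfying the doubling volume property, let m > 1, c > 0, α ∈ ℝ and C₀ > 0. Then there exist constants C' > 0 and c' > 0 such that the following holds: for every y ∈ M, every t > 0, and every nonnegative measurable function g on M satisfying, for every R ≥ 0, (∫_{M∖B(y,R)} g(x)² dμ(x))^{1/2} ≤ C₀ · t^{−α} · V(y,t^{1/m})^{−1/2} · exp(−c (R^m/t)^{1/(m-1)}), one has, for every r ≥ 0, ∫_{M∖B(y,r)} g(x) dμ(x) ≤ C' · t^{−α} · exp(−c' (r^m/t)^{1/(m-1)}). -/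
open MeasureTheory Metric Set Filter

lemma aux_doub {M : Type*} [PseudoMetricSpace M] [MeasurableSpace M] (μ : Measure M) (D : ℝ)
    (hdoub : ∀ (x : M) (r : ℝ), 0 < r → μ (ball x (2 * r)) ≤ ENNReal.ofReal D * μ (ball x r))
    (x : M) {ρ : ℝ} (hρ : 0 < ρ) :
    ∀ n : ℕ, μ (ball x (2 ^ n * ρ)) ≤ (ENNReal.ofReal D) ^ n * μ (ball x ρ) := by
  intro n
  induction n with
  | zero => simp
  | succ n ih =>
      have h1 : (2:ℝ) ^ (n+1) * ρ = 2 * (2 ^ n * ρ) := by ring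
      have h2 := hdoub x (2 ^ n * ρ) (by positivity)
      rw [h1]
      calc μ (ball x (2 * (2 ^ n * ρ))) ≤ ENNReal.ofReal D * μ (ball x (2 ^ n * ρ)) := h2
        _ ≤ ENNReal.ofReal D * ((ENNReal.ofReal D) ^ n * μ (ball x ρ)) := by
            exact mul_le_mul_right ih _
        _ = (ENNReal.ofReal D) ^ (n+1) * μ (ball x ρ) := by ring

lemma aux_polyexp (c β : ℝ) (hc : 0 < c) :
    ∃ A : ℝ, 1 ≤ A ∧ ∀ s : ℝ, 1 ≤ s → s ^ β ≤ A * Real.exp (c * s) := by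
  set n := ⌈β⌉₊ with hn
  refine ⟨max 1 ((n.factorial : ℝ) * (1/c) ^ n), le_max_left _ _, fun s hs => ?_⟩
  have hs0 : (0:ℝ) < s := lt_of_lt_of_le one_pos hs
  have h1 : s ^ β ≤ s ^ (n:ℝ) := Real.rpow_le_rpow_of_exponent_le hs (Nat.le_ceil β)
  rw [Real.rpow_natCast] at h1
  have h2 : (c * s) ^ n / (n.factorial : ℝ) ≤ Real.exp (c * s) :=
    Real.pow_div_factorial_le_exp (x := c * s) (by positivity) n
  have hfac : (0:ℝ) < (n.factorial : ℝ) := by positivity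
  rw [div_le_iff₀ hfac] at h2
  have h3 : s ^ n ≤ (n.factorial : ℝ) * (1/c) ^ n * Real.exp (c * s) := by
    have h4 : (c * s) ^ n * (1/c) ^ n = s ^ n := by
      rw [← mul_pow]; congr 1; field_simp
    calc s ^ n = (c * s) ^ n * (1/c) ^ n := h4.symm
      _ ≤ (Real.exp (c * s) * (n.factorial : ℝ)) * (1/c) ^ n := by
          apply mul_le_mul_of_nonneg_right h2 (by positivity)
      _ = (n.factorial : ℝ) * (1/c) ^ n * Real.exp (c * s) := by ring
  calc s ^ β ≤ s ^ n := h1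
    _ ≤ (n.factorial : ℝ) * (1/c) ^ n * Real.exp (c * s) := h3
    _ ≤ max 1 ((n.factorial : ℝ) * (1/c) ^ n) * Real.exp (c * s) := by
        apply mul_le_mul_of_nonneg_right (le_max_right _ _) (Real.exp_pos _).le

lemma aux_sum (D c : ℝ) (hD : 1 ≤ D) (hc : 0 < c) :
    Summable (fun i : ℕ => D ^ (i+1) * Real.exp (-(c * 2 ^ i))) := by
  have hD0 : (0:ℝ) < D := lt_of_lt_of_le one_pos hD
  apply summable_of_ratio_norm_eventually_le (r := 1/2) (by norm_num)
  have ht : Tendsto (fun i : ℕ => D * Real.exp (-(c * 2 ^ i))) atTop (nhds 0) := by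
    have h1 : Tendsto (fun i : ℕ => (2:ℝ) ^ i) atTop atTop :=
      tendsto_pow_atTop_atTop_of_one_lt one_lt_two
    have h2 : Tendsto (fun i : ℕ => c * (2:ℝ) ^ i) atTop atTop := h1.const_mul_atTop hc
    have h3 : Tendsto (fun i : ℕ => -(c * (2:ℝ) ^ i)) atTop atBot :=
      tendsto_neg_atBot_iff.2 h2
    have h4 : Tendsto (fun i : ℕ => Real.exp (-(c * (2:ℝ) ^ i))) atTop (nhds 0) :=
      Real.tendsto_exp_atBot.comp h3
    simpa using h4.const_mul D
  have hev : ∀ᶠ i in atTop, D * Real.exp (-(c * 2 ^ i)) < 1/2 :=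
    ht.eventually_lt_const (by norm_num)
  filter_upwards [hev] with i hi
  have hpos : (0:ℝ) < D ^ (i+1) * Real.exp (-(c * 2 ^ i)) := by positivity
  have hpos2 : (0:ℝ) < D ^ (i+2) * Real.exp (-(c * 2 ^ (i+1))) := by positivity
  rw [Real.norm_of_nonneg hpos2.le, Real.norm_of_nonneg hpos.le]
  have heq : D ^ (i+1+1) * Real.exp (-(c * 2 ^ (i+1)))
      = (D * Real.exp (-(c * 2 ^ i))) * (D ^ (i+1) * Real.exp (-(c * 2 ^ i))) := by
    rw [show -(c * (2:ℝ) ^ (i+1)) = -(c * 2 ^ i) + -(c * 2 ^ i) by ring, Real.exp_add]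
    ring
  rw [heq]
  apply mul_le_mul_of_nonneg_right hi.le hpos.le


set_option maxHeartbeats 2000000 in
/-- On a doubling metric measure space, if a nonnegative function `g` satisfies the weighted
`L²` off-diagonal bounds
`(∫_{M∖B(y,R)} g² dμ)^{1/2} ≤ C₀ t^{−α} V(y,t^{1/m})^{−1/2} exp(−c (R^m/t)^{1/(m-1)})`
for all `R ≥ 0`, then `∫_{M∖B(y,r)} g dμ ≤ C' t^{−α} exp(−c' (r^m/t)^{1/(m-1)})` for all `r ≥ 0`. -/
theorem weighted_L1_from_L2_estimate
    {M : Type*} [MetricSpace M] [MeasurableSpace M] [BorelSpace M] (μ : Measure M)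
    (hpos : ∀ (x : M) (r : ℝ), 0 < r → 0 < μ (ball x r))
    (hfin : ∀ (x : M) (r : ℝ), 0 < r → μ (ball x r) < ⊤)
    (C_D : ℝ) (hC_D : 0 < C_D)
    (hdoub : ∀ (x : M) (r : ℝ), 0 < r →
      μ (ball x (2 * r)) ≤ ENNReal.ofReal C_D * μ (ball x r))
    (m c α C₀ : ℝ) (hm : 1 < m) (hc : 0 < c) (hC₀ : 0 < C₀) :
    ∃ C' > (0 : ℝ), ∃ c' > (0 : ℝ), ∀ (y : M) (t : ℝ), 0 < t → ∀ g : M → ℝ,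
      Measurable g → (∀ x, 0 ≤ g x) →
      (∀ R : ℝ, 0 ≤ R →
        (∫⁻ x in (ball y R)ᶜ, ENNReal.ofReal (g x ^ 2) ∂μ) ^ ((1 : ℝ) / 2)
          ≤ ENNReal.ofReal (C₀ * t ^ (-α) *
              ((μ (ball y (t ^ (1 / m)))).toReal) ^ (-(1 : ℝ) / 2) *
              Real.exp (-c * (R ^ m / t) ^ (1 / (m - 1))))) →
      ∀ r : ℝ, 0 ≤ r →
        ∫⁻ x in (ball y r)ᶜ, ENNReal.ofReal (g x) ∂μ
          ≤ ENNReal.ofReal (C' * t ^ (-α) *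
              Real.exp (-c' * (r ^ m / t) ^ (1 / (m - 1)))) := by
  -- global constants
  set D : ℝ := max C_D 1 with hDdef
  have hD1 : (1:ℝ) ≤ D := le_max_right _ _
  have hD0 : (0:ℝ) < D := lt_of_lt_of_le one_pos hD1
  have hdoub' : ∀ (x : M) (r : ℝ), 0 < r →
      μ (ball x (2 * r)) ≤ ENNReal.ofReal D * μ (ball x r) := by
    intro x r hr
    exact (hdoub x r hr).trans
      (mul_le_mul_left (ENNReal.ofReal_le_ofReal (le_max_left _ _)) _)
  set β : ℝ := Real.logb 2 D with hβdef
  obtain ⟨A₁, hA₁1, hA₁⟩ := aux_polyexp (c/8) β (by positivity)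
  set q : ℕ → ℝ := fun i => D ^ (i+1) * Real.exp (-(c/8 * 2 ^ i)) with hqdef
  have hqsum : Summable q := aux_sum D (c/8) hD1 (by positivity)
  have hqnn : ∀ i, 0 ≤ q i := fun i => by positivity
  set A₂ : ℝ := ∑' i, q i with hA₂def
  have hA₂pos : 0 < A₂ := lt_of_lt_of_le (by positivity : (0:ℝ) < q 0) (hqsum.le_tsum 0 (fun j _ => hqnn j))
  set B : ℝ := Real.exp (c/2) * D * A₁ with hBdef
  have hBpos : 0 < B := by positivity
  refine ⟨C₀ * B * A₂, by positivity, c/4, by positivity, ?_⟩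
  intro y t ht g hg hg0 hhyp r hr
  -- local notation
  have htα : (0:ℝ) < t ^ (-α) := Real.rpow_pos_of_pos ht _
  set τ : ℝ := t ^ (1/m) with hτdef
  have hτpos : (0:ℝ) < τ := Real.rpow_pos_of_pos ht _
  have hm1 : (0:ℝ) < m - 1 := by linarith
  have hm0 : (0:ℝ) < m := by linarith
  have hτm : τ ^ m = t := by
    rw [hτdef, ← Real.rpow_mul ht.le, one_div_mul_cancel (ne_of_gt hm0), Real.rpow_one]
  set r₀ : ℝ := max r τ with hr₀def
  have hr₀pos : (0:ℝ) < r₀ := lt_of_lt_of_le hτpos (le_max_right _ _)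
  have hrr₀ : r ≤ r₀ := le_max_left _ _
  have hτr₀ : τ ≤ r₀ := le_max_right _ _
  set Vr : ℝ := (μ (ball y τ)).toReal with hVrdef
  have hVfin : μ (ball y τ) < ⊤ := hfin y τ hτpos
  have hVr : (0:ℝ) < Vr := ENNReal.toReal_pos (hpos y τ hτpos).ne' hVfin.ne
  set s : ℝ := (r₀ ^ m / t) ^ (1/(m-1)) with hsdef
  set σr : ℝ := (r ^ m / t) ^ (1/(m-1)) with hσrdef
  have hσr0 : 0 ≤ σr := by rw [hσrdef]; positivity
  have hrmt : (1:ℝ) ≤ r₀ ^ m / t := by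
    rw [le_div_iff₀ ht, one_mul]
    calc t = τ ^ m := hτm.symm
      _ ≤ r₀ ^ m := Real.rpow_le_rpow hτpos.le hτr₀ hm0.le
  have hs1 : (1:ℝ) ≤ s := by
    calc (1:ℝ) = (1:ℝ) ^ (1/(m-1)) := (Real.one_rpow _).symm
      _ ≤ s := Real.rpow_le_rpow zero_le_one hrmt (by positivity)
  have hσs : σr ≤ s := by
    apply Real.rpow_le_rpow (by positivity) _ (by positivity)
    have : r ^ m ≤ r₀ ^ m := Real.rpow_le_rpow hr hrr₀ hm0.le
    gcongr
  set k : ℕ := ⌈Real.logb 2 (r₀ / τ)⌉₊ with hkdef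
  have hu1 : (1:ℝ) ≤ r₀ / τ := (one_le_div hτpos).2 hτr₀
  have hu0 : (0:ℝ) < r₀ / τ := lt_of_lt_of_le one_pos hu1
  have hr₀k : r₀ ≤ 2 ^ k * τ := by
    have h1 : r₀ / τ = (2:ℝ) ^ Real.logb 2 (r₀/τ) :=
      (Real.rpow_logb two_pos (by norm_num) hu0).symm
    have h2 : (2:ℝ) ^ Real.logb 2 (r₀/τ) ≤ (2:ℝ) ^ ((k:ℕ):ℝ) :=
      Real.rpow_le_rpow_of_exponent_le one_le_two (Nat.le_ceil _)
    rw [Real.rpow_natCast] at h2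
    have h3 : r₀ / τ ≤ 2 ^ k := le_trans (le_of_eq h1) h2
    rw [div_le_iff₀ hτpos] at h3
    exact h3
  have hexp1 : (1:ℝ) ≤ m * (1/(m-1)) := by
    rw [mul_one_div, le_div_iff₀ hm1]; linarith
  have hus : r₀ / τ ≤ s := by
    have h1 : r₀ ^ m / t = (r₀ / τ) ^ m := by
      rw [Real.div_rpow hr₀pos.le hτpos.le, hτm]
    have h2 : s = (r₀/τ) ^ (m * (1/(m-1))) := by
      rw [hsdef, h1, Real.rpow_mul hu0.le]
    rw [h2]
    calc r₀/τ = (r₀/τ) ^ (1:ℝ) := (Real.rpow_one _).symm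
      _ ≤ (r₀/τ) ^ (m * (1/(m-1))) := Real.rpow_le_rpow_of_exponent_le hu1 hexp1
  have hs0 : (0:ℝ) < s := lt_of_lt_of_le one_pos hs1
  have hDk : D ^ k ≤ D * s ^ β := by
    have hk1 : ((k:ℕ):ℝ) ≤ Real.logb 2 s + 1 := by
      have h0 : 0 ≤ Real.logb 2 (r₀/τ) := Real.logb_nonneg one_lt_two hu1
      have h1 : ((k:ℕ):ℝ) < Real.logb 2 (r₀/τ) + 1 := Nat.ceil_lt_add_one h0
      have h2 : Real.logb 2 (r₀/τ) ≤ Real.logb 2 s :=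
        Real.logb_le_logb_of_le (by norm_num) hu0 hus
      linarith
    have h3 : D ^ k = D ^ ((k:ℕ):ℝ) := (Real.rpow_natCast D k).symm
    have h4 : D ^ ((k:ℕ):ℝ) ≤ D ^ (Real.logb 2 s + 1) :=
      Real.rpow_le_rpow_of_exponent_le hD1 hk1
    have h5 : D ^ (Real.logb 2 s + 1) = D ^ (Real.logb 2 s) * D := by
      rw [Real.rpow_add hD0, Real.rpow_one]
    have h6 : D ^ (Real.logb 2 s) = s ^ β := by
      rw [Real.rpow_def_of_pos hD0, hβdef, Real.rpow_def_of_pos hs0, Real.logb, Real.logb]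
      congr 1; ring
    rw [h3]
    calc D ^ ((k:ℕ):ℝ) ≤ D ^ (Real.logb 2 s + 1) := h4
      _ = s ^ β * D := by rw [h5, h6]
      _ = D * s ^ β := by ring
  -- annuli
  set ρ : ℕ → ℝ := fun i => if i = 0 then r else 2 ^ i * r₀ with hρdef
  have hρ0 : ∀ i, 0 ≤ ρ i := by
    intro i; rw [hρdef]; dsimp only; split
    · exact hr
    · positivity
  have hρsucc : ∀ i : ℕ, ρ (i+1) = 2 ^ (i+1) * r₀ := fun i => by simp [hρdef]
  set SS : ℕ → Set M := fun i => (ball y (ρ i))ᶜ ∩ ball y (ρ (i+1)) with hSSdef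
  have hcover : (ball y r)ᶜ ⊆ ⋃ i, SS i := by
    intro x hx
    have hex : ∃ i : ℕ, dist x y < ρ (i+1) := by
      obtain ⟨n, hn⟩ := pow_unbounded_of_one_lt (dist x y / r₀) one_lt_two
      refine ⟨n, ?_⟩
      rw [hρsucc]
      rw [div_lt_iff₀ hr₀pos] at hn
      have h2 : (2:ℝ) ^ n * r₀ ≤ 2 ^ (n+1) * r₀ := by
        have h2' : (2:ℝ) ^ n ≤ 2 ^ (n+1) := pow_le_pow_right₀ one_le_two (Nat.le_succ n)
        exact mul_le_mul_of_nonneg_right h2' hr₀pos.le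
      linarith
    refine mem_iUnion.2 ⟨Nat.find hex, ?_, mem_ball.2 (Nat.find_spec hex)⟩
    show x ∉ ball y (ρ (Nat.find hex))
    rcases hfind : Nat.find hex with _ | j
    · have : ρ 0 = r := by simp [hρdef]
      rw [this]; exact hx
    · have hmin := Nat.find_min hex (show j < Nat.find hex by omega)
      intro hmem
      exact hmin (mem_ball.1 hmem)
  -- Cauchy-Schwarz
  have hCS : ∀ S : Set M, ∫⁻ x in S, ENNReal.ofReal (g x) ∂μ
      ≤ (∫⁻ x in S, ENNReal.ofReal (g x ^ 2) ∂μ) ^ ((1:ℝ)/2) * (μ S) ^ ((1:ℝ)/2) := by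
    intro S
    have hconj : Real.HolderConjugate 2 2 := Real.HolderConjugate.two_two
    have h := ENNReal.lintegral_mul_le_Lp_mul_Lq (μ.restrict S) hconj
      (f := fun x => ENNReal.ofReal (g x)) (g := fun _ => (1 : ENNReal))
      (hg.ennreal_ofReal.aemeasurable) aemeasurable_const
    simp only [Pi.mul_apply, mul_one, ENNReal.one_rpow, lintegral_one,
      Measure.restrict_apply_univ] at h
    have heq : ∀ x : M, ENNReal.ofReal (g x) ^ (2:ℝ) = ENNReal.ofReal (g x ^ 2) := by
      intro x
      rw [ENNReal.ofReal_rpow_of_nonneg (hg0 x) (by norm_num), Real.rpow_two]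
    simp only [heq] at h
    exact h
  -- per-annulus bound
  have hann : ∀ i : ℕ, ∫⁻ x in SS i, ENNReal.ofReal (g x) ∂μ
      ≤ ENNReal.ofReal ((C₀ * t ^ (-α) * Real.exp (-(c/4) * σr) * B) * q i) := by
    intro i
    set σi : ℝ := ((ρ i) ^ m / t) ^ (1/(m-1)) with hσidef
    have hB2 : (∫⁻ x in SS i, ENNReal.ofReal (g x ^ 2) ∂μ) ^ ((1:ℝ)/2)
        ≤ ENNReal.ofReal (C₀ * t ^ (-α) * Vr ^ (-(1:ℝ)/2) * Real.exp (-c * σi)) := by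
      refine le_trans (ENNReal.rpow_le_rpow (lintegral_mono_set inter_subset_left)
        (by norm_num)) (hhyp (ρ i) (hρ0 i))
    have hμS : μ (SS i) ^ ((1:ℝ)/2) ≤ ENNReal.ofReal ((D ^ (i+1+k) * Vr) ^ ((1:ℝ)/2)) := by
      have h1 : μ (SS i) ≤ ENNReal.ofReal (D ^ (i+1+k) * Vr) := by
        calc μ (SS i) ≤ μ (ball y (ρ (i+1))) := measure_mono inter_subset_right
          _ ≤ μ (ball y (2 ^ (i+1+k) * τ)) := by
              apply measure_mono (ball_subset_ball ?_)
              rw [hρsucc]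
              calc (2:ℝ) ^ (i+1) * r₀ ≤ 2 ^ (i+1) * (2 ^ k * τ) := by
                    exact mul_le_mul_of_nonneg_left hr₀k (by positivity)
                _ = 2 ^ (i+1+k) * τ := by rw [pow_add]; ring
          _ ≤ (ENNReal.ofReal D) ^ (i+1+k) * μ (ball y τ) := aux_doub μ D hdoub' y hτpos (i+1+k)
          _ = ENNReal.ofReal (D ^ (i+1+k) * Vr) := by
              rw [ENNReal.ofReal_mul (by positivity), ENNReal.ofReal_pow hD0.le, hVrdef,
                ENNReal.ofReal_toReal hVfin.ne]
      calc μ (SS i) ^ ((1:ℝ)/2) ≤ (ENNReal.ofReal (D ^ (i+1+k) * Vr)) ^ ((1:ℝ)/2) :=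
            ENNReal.rpow_le_rpow h1 (by norm_num)
        _ = ENNReal.ofReal ((D ^ (i+1+k) * Vr) ^ ((1:ℝ)/2)) :=
            ENNReal.ofReal_rpow_of_nonneg (by positivity) (by norm_num)
    have hstar : σr/4 + (2:ℝ)^i/8 + s/8 - 1/2 ≤ σi := by
      rcases i with _ | j
      · have hρ0eq : ρ 0 = r := by simp [hρdef]
        rw [hσidef, hρ0eq, ← hσrdef]
        by_cases hcase : r ≤ τ
        · have hs_eq : s = 1 := by
            rw [hsdef, hr₀def, max_eq_right hcase, hτm, div_self (ne_of_gt ht), Real.one_rpow]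
          rw [hs_eq]; norm_num; linarith [hσr0]
        · have h1 : τ ≤ r := le_of_not_ge hcase
          have hs_eq : s = σr := by rw [hsdef, hσrdef, hr₀def, max_eq_left h1]
          have hsσ : (1:ℝ) ≤ σr := hs_eq ▸ hs1
          rw [hs_eq]; norm_num; linarith
      · have hρeq : ρ (j+1) = 2 ^ (j+1) * r₀ := hρsucc j
        have hx1 : (1:ℝ) ≤ (2:ℝ) ^ (j+1) := one_le_pow₀ one_le_two
        have hmul : ((2:ℝ) ^ (j+1) * r₀) ^ m = ((2:ℝ) ^ (j+1)) ^ m * r₀ ^ m :=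
          Real.mul_rpow (by positivity) hr₀pos.le
        have h2 : (((2:ℝ) ^ (j+1) * r₀) ^ m / t) ^ (1/(m-1))
            = (((2:ℝ) ^ (j+1)) ^ m) ^ (1/(m-1)) * s := by
          rw [hmul, mul_div_assoc, Real.mul_rpow (by positivity) (by positivity), hsdef]
        have h3 : ((2:ℝ) ^ (j+1)) ^ (m * (1/(m-1))) = (((2:ℝ) ^ (j+1)) ^ m) ^ (1/(m-1)) :=
          Real.rpow_mul (by positivity) _ _
        have h4 : (2:ℝ) ^ (j+1) ≤ (((2:ℝ) ^ (j+1)) ^ m) ^ (1/(m-1)) := by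
          rw [← h3]
          calc (2:ℝ) ^ (j+1) = ((2:ℝ) ^ (j+1)) ^ (1:ℝ) := (Real.rpow_one _).symm
            _ ≤ _ := Real.rpow_le_rpow_of_exponent_le hx1 hexp1
        have h5 : (2:ℝ) ^ (j+1) * s ≤ σi := by
          rw [hσidef, hρeq, h2]
          exact mul_le_mul_of_nonneg_right h4 (by positivity)
        have hprod : 0 ≤ ((2:ℝ) ^ (j+1) - 1) * (s - 1) :=
          mul_nonneg (sub_nonneg.2 hx1) (sub_nonneg.2 hs1)
        linarith [hprod, h5, hσs, hσr0, hx1, hs1]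
    have e1 : Real.exp (-c * σi) ≤ Real.exp (c/2) * Real.exp (-(c/4) * σr)
        * Real.exp (-(c/8 * 2 ^ i)) * Real.exp (-(c/8 * s)) := by
      rw [← Real.exp_add, ← Real.exp_add, ← Real.exp_add]
      apply Real.exp_le_exp.2
      linarith [mul_le_mul_of_nonneg_left hstar hc.le]
    have e2 : D ^ k * Real.exp (-(c/8 * s)) ≤ D * A₁ := by
      have h1 : D ^ k ≤ D * (A₁ * Real.exp (c/8 * s)) :=
        le_trans hDk (mul_le_mul_of_nonneg_left (hA₁ s hs1) hD0.le)
      calc D ^ k * Real.exp (-(c/8 * s))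
          ≤ (D * (A₁ * Real.exp (c/8 * s))) * Real.exp (-(c/8 * s)) :=
            mul_le_mul_of_nonneg_right h1 (Real.exp_pos _).le
        _ = D * A₁ * Real.exp (c/8 * s + -(c/8 * s)) := by rw [Real.exp_add]; ring
        _ = D * A₁ := by norm_num
    have hkey : Real.exp (-c * σi) * D ^ (i+1+k)
        ≤ B * Real.exp (-(c/4) * σr) * (D ^ (i+1) * Real.exp (-(c/8 * 2 ^ i))) := by
      calc Real.exp (-c * σi) * D ^ (i+1+k)
          = (Real.exp (-c * σi)) * (D ^ (i+1) * D ^ k) := by rw [pow_add]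
        _ ≤ (Real.exp (c/2) * Real.exp (-(c/4) * σr) * Real.exp (-(c/8 * 2 ^ i))
              * Real.exp (-(c/8 * s))) * (D ^ (i+1) * D ^ k) :=
            mul_le_mul_of_nonneg_right e1 (by positivity)
        _ = (Real.exp (c/2) * Real.exp (-(c/4) * σr) * (D ^ (i+1) * Real.exp (-(c/8 * 2 ^ i))))
              * (D ^ k * Real.exp (-(c/8 * s))) := by ring
        _ ≤ (Real.exp (c/2) * Real.exp (-(c/4) * σr) * (D ^ (i+1) * Real.exp (-(c/8 * 2 ^ i))))
              * (D * A₁) := mul_le_mul_of_nonneg_left e2 (by positivity)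
        _ = B * Real.exp (-(c/4) * σr) * (D ^ (i+1) * Real.exp (-(c/8 * 2 ^ i))) := by
            rw [hBdef]; ring
    have hreal : C₀ * t ^ (-α) * Vr ^ (-(1:ℝ)/2) * Real.exp (-c * σi)
        * ((D ^ (i+1+k) * Vr) ^ ((1:ℝ)/2))
        ≤ (C₀ * t ^ (-α) * Real.exp (-(c/4) * σr) * B) * q i := by
      have hsplit : ((D ^ (i+1+k) * Vr) ^ ((1:ℝ)/2))
          = (D ^ (i+1+k) : ℝ) ^ ((1:ℝ)/2) * Vr ^ ((1:ℝ)/2) :=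
        Real.mul_rpow (by positivity) hVr.le
      have hVcancel : Vr ^ (-(1:ℝ)/2) * Vr ^ ((1:ℝ)/2) = 1 := by
        rw [← Real.rpow_add hVr]; norm_num
      have hhalf : (D ^ (i+1+k) : ℝ) ^ ((1:ℝ)/2) ≤ D ^ (i+1+k) := by
        have h1 : (1:ℝ) ≤ D ^ (i+1+k) := one_le_pow₀ hD1
        calc (D ^ (i+1+k) : ℝ) ^ ((1:ℝ)/2) ≤ (D ^ (i+1+k) : ℝ) ^ (1:ℝ) :=
              Real.rpow_le_rpow_of_exponent_le h1 (by norm_num)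
          _ = D ^ (i+1+k) := Real.rpow_one _
      calc C₀ * t ^ (-α) * Vr ^ (-(1:ℝ)/2) * Real.exp (-c * σi)
            * ((D ^ (i+1+k) * Vr) ^ ((1:ℝ)/2))
          = (C₀ * t ^ (-α)) * (Real.exp (-c * σi) * (D ^ (i+1+k) : ℝ) ^ ((1:ℝ)/2))
              * (Vr ^ (-(1:ℝ)/2) * Vr ^ ((1:ℝ)/2)) := by rw [hsplit]; ring
        _ = (C₀ * t ^ (-α)) * (Real.exp (-c * σi) * (D ^ (i+1+k) : ℝ) ^ ((1:ℝ)/2)) := by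
            rw [hVcancel, mul_one]
        _ ≤ (C₀ * t ^ (-α)) * (Real.exp (-c * σi) * D ^ (i+1+k)) :=
            mul_le_mul_of_nonneg_left
              (mul_le_mul_of_nonneg_left hhalf (Real.exp_pos _).le) (by positivity)
        _ ≤ (C₀ * t ^ (-α)) * (B * Real.exp (-(c/4) * σr)
              * (D ^ (i+1) * Real.exp (-(c/8 * 2 ^ i)))) :=
            mul_le_mul_of_nonneg_left hkey (by positivity)
        _ = (C₀ * t ^ (-α) * Real.exp (-(c/4) * σr) * B) * q i := by
            simp only [hqdef]; ring
    calc ∫⁻ x in SS i, ENNReal.ofReal (g x) ∂μ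
        ≤ (∫⁻ x in SS i, ENNReal.ofReal (g x ^ 2) ∂μ) ^ ((1:ℝ)/2) * (μ (SS i)) ^ ((1:ℝ)/2) :=
          hCS (SS i)
      _ ≤ ENNReal.ofReal (C₀ * t ^ (-α) * Vr ^ (-(1:ℝ)/2) * Real.exp (-c * σi))
            * ENNReal.ofReal ((D ^ (i+1+k) * Vr) ^ ((1:ℝ)/2)) := mul_le_mul' hB2 hμS
      _ = ENNReal.ofReal (C₀ * t ^ (-α) * Vr ^ (-(1:ℝ)/2) * Real.exp (-c * σi)
            * ((D ^ (i+1+k) * Vr) ^ ((1:ℝ)/2))) := (ENNReal.ofReal_mul (by positivity)).symm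
      _ ≤ ENNReal.ofReal ((C₀ * t ^ (-α) * Real.exp (-(c/4) * σr) * B) * q i) :=
          ENNReal.ofReal_le_ofReal hreal
  -- sum up
  calc ∫⁻ x in (ball y r)ᶜ, ENNReal.ofReal (g x) ∂μ
      ≤ ∫⁻ x in ⋃ i, SS i, ENNReal.ofReal (g x) ∂μ := lintegral_mono_set hcover
    _ ≤ ∑' i, ∫⁻ x in SS i, ENNReal.ofReal (g x) ∂μ := lintegral_iUnion_le _ _
    _ ≤ ∑' i, ENNReal.ofReal ((C₀ * t ^ (-α) * Real.exp (-(c/4) * σr) * B) * q i) :=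
        ENNReal.tsum_le_tsum hann
    _ = ENNReal.ofReal (∑' i, (C₀ * t ^ (-α) * Real.exp (-(c/4) * σr) * B) * q i) := by
        rw [ENNReal.ofReal_tsum_of_nonneg (fun i => by positivity) (hqsum.mul_left _)]
    _ = ENNReal.ofReal ((C₀ * B * A₂) * t ^ (-α) * Real.exp (-(c/4) * σr)) := by
        rw [tsum_mul_left, ← hA₂def]; ring_nf
end

section
/- Let (M,d,μ) be a metric measure space satisfying the doubling volume property, let m > 1, c > 0 and C₀ > 0. Then there exist constants C > 0 and c' > 0 such that the following holds: for every t > 0, every ball B = B(x_B, r) of radius r > 0, every integer j ≥ 2, every measurable kernel p : M × M → [0,∞) satisfying p(x,y) ≤ C₀ · V(y,t^{1/m})^{-1} · exp(−c (d(x,y)^m/t)^{1/(m-1)}) for all x ∈ M and y ∈ B, and every f ∈ L¹(M,μ) supported in B, the function P f(x) := ∫_M p(x,y) f(y) dμ(y) satisfies μ(2^{j+1}B)^{−1/2} · ‖P f‖_{L²(C_j(B))} ≤ C · μ(B)^{−1} · exp(−c' (2^{jm} r^m / t)^{1/(m-1)}) · ‖f‖_{L¹}. -/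
open MeasureTheory Metric Set

private lemma rpow_le_exp_aux {β δ x : ℝ} (hβ : 0 < β) (hδ : 0 < δ) (hx : 0 ≤ x) :
    x ^ β ≤ (β / δ) ^ β * Real.exp (δ * x) := by
  set u := δ * x / β with hu
  have hu0 : 0 ≤ u := by positivity
  have hxu : x = (β / δ) * u := by rw [hu]; field_simp
  have h1 : u ^ β ≤ Real.exp u ^ β :=
    Real.rpow_le_rpow hu0 (by linarith [Real.add_one_le_exp u]) hβ.le
  have h2 : Real.exp u ^ β = Real.exp (δ * x) := by
    rw [← Real.exp_mul, hu]; congr 1; field_simp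
  calc x ^ β = ((β / δ) * u) ^ β := by rw [← hxu]
    _ = (β / δ) ^ β * u ^ β := Real.mul_rpow (by positivity) hu0
    _ ≤ (β / δ) ^ β * Real.exp (δ * x) := by
        rw [← h2]; exact mul_le_mul_of_nonneg_left h1 (by positivity)

private lemma vol_comp_aux {M : Type*} [MetricSpace M] [MeasurableSpace M] (μ : Measure M)
    (hfin : ∀ (x : M) (r : ℝ), 0 < r → μ (ball x r) < ⊤)
    {D : ℝ} (hD : 2 ≤ D)
    (hdoub : ∀ (x : M) (r : ℝ), 0 < r →
      μ (ball x (2 * r)) ≤ ENNReal.ofReal D * μ (ball x r))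
    (y : M) {ρ R : ℝ} (hρ : 0 < ρ) :
    (μ (ball y R)).toReal ≤
      D * (max (R / ρ) 1) ^ Real.logb 2 D * (μ (ball y ρ)).toReal := by
  have hD0 : (0:ℝ) < D := by linarith
  set β := Real.logb 2 D with hβ
  have hβ0 : 0 ≤ β := Real.logb_nonneg one_lt_two (by linarith)
  have hiter : ∀ n : ℕ, μ (ball y (2 ^ n * ρ)) ≤ (ENNReal.ofReal D) ^ n * μ (ball y ρ) := by
    intro n
    induction n with
    | zero => simp
    | succ n ih =>
        have h2 : (2:ℝ) ^ (n+1) * ρ = 2 * (2 ^ n * ρ) := by ring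
        calc μ (ball y ((2:ℝ) ^ (n+1) * ρ)) = μ (ball y (2 * (2 ^ n * ρ))) := by rw [h2]
          _ ≤ ENNReal.ofReal D * μ (ball y (2 ^ n * ρ)) := hdoub y _ (by positivity)
          _ ≤ ENNReal.ofReal D * ((ENNReal.ofReal D) ^ n * μ (ball y ρ)) :=
              mul_le_mul_right ih _
          _ = (ENNReal.ofReal D) ^ (n+1) * μ (ball y ρ) := by ring
  set q := max (R / ρ) 1 with hq
  have hq1 : (1:ℝ) ≤ q := le_max_right _ _
  have hq0 : (0:ℝ) < q := by linarith
  set n := ⌈Real.logb 2 q⌉₊ with hn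
  have hlog0 : 0 ≤ Real.logb 2 q := Real.logb_nonneg one_lt_two hq1
  have hn1 : Real.logb 2 q ≤ (n : ℝ) := Nat.le_ceil _
  have hn2 : (n : ℝ) < Real.logb 2 q + 1 := Nat.ceil_lt_add_one hlog0
  have hq2n : q ≤ (2:ℝ) ^ n := by
    calc q = (2:ℝ) ^ Real.logb 2 q := (Real.rpow_logb two_pos (by norm_num) hq0).symm
      _ ≤ (2:ℝ) ^ (n : ℝ) := Real.rpow_le_rpow_of_exponent_le one_le_two hn1
      _ = (2:ℝ) ^ n := Real.rpow_natCast 2 n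
  have hRn : R ≤ 2 ^ n * ρ := by
    have h1 : R / ρ ≤ q := le_max_left _ _
    have := mul_le_mul_of_nonneg_right (h1.trans hq2n) hρ.le
    rwa [div_mul_cancel₀ _ hρ.ne'] at this
  have hmono : μ (ball y R) ≤ (ENNReal.ofReal D) ^ n * μ (ball y ρ) :=
    le_trans (measure_mono (ball_subset_ball hRn)) (hiter n)
  have hfinρ : μ (ball y ρ) ≠ ⊤ := (hfin y ρ hρ).ne
  have htop : (ENNReal.ofReal D) ^ n * μ (ball y ρ) ≠ ⊤ :=
    ENNReal.mul_ne_top (by simp [ENNReal.pow_ne_top]) hfinρ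
  have h1 : (μ (ball y R)).toReal ≤ D ^ n * (μ (ball y ρ)).toReal := by
    have := ENNReal.toReal_mono htop hmono
    rwa [ENNReal.toReal_mul, ENNReal.toReal_pow, ENNReal.toReal_ofReal hD0.le] at this
  have hDn : (D : ℝ) ^ n ≤ D * q ^ β := by
    have hD2 : D = (2:ℝ) ^ β := (Real.rpow_logb two_pos (by norm_num) hD0).symm
    have e1 : (D : ℝ) ^ n = (2:ℝ) ^ (β * (n : ℝ)) := by
      rw [Real.rpow_mul (by norm_num : (0:ℝ) ≤ 2), ← hD2, Real.rpow_natCast]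
    have e2 : β * (n : ℝ) ≤ β * Real.logb 2 q + β := by nlinarith
    calc (D : ℝ) ^ n = (2:ℝ) ^ (β * (n : ℝ)) := e1
      _ ≤ (2:ℝ) ^ (β * Real.logb 2 q + β) :=
          Real.rpow_le_rpow_of_exponent_le one_le_two e2
      _ = (2:ℝ) ^ (Real.logb 2 q * β) * (2:ℝ) ^ β := by
          rw [← Real.rpow_add two_pos]; ring_nf
      _ = q ^ β * D := by
          rw [Real.rpow_mul (by norm_num : (0:ℝ) ≤ 2), Real.rpow_logb two_pos (by norm_num) hq0,
            ← hD2]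
      _ = D * q ^ β := mul_comm _ _
  calc (μ (ball y R)).toReal ≤ D ^ n * (μ (ball y ρ)).toReal := h1
    _ ≤ D * q ^ β * (μ (ball y ρ)).toReal :=
        mul_le_mul_of_nonneg_right hDn ENNReal.toReal_nonneg

set_option maxHeartbeats 2000000 in
/-- Sub-Gaussian Davies–Gaffney estimate: on a doubling metric measure space, if the kernel `p`
satisfies `p(x,y) ≤ C₀ V(y,t^{1/m})⁻¹ exp(−c (d(x,y)^m/t)^{1/(m-1)})` for `y ∈ B = B(x_B,r)`,
then for `f ∈ L¹` supported in `B` and `j ≥ 2`,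
`μ(2^{j+1}B)^{−1/2} ‖Pf‖_{L²(C_j(B))} ≤ C μ(B)⁻¹ exp(−c' (2^{jm} r^m/t)^{1/(m-1)}) ‖f‖₁`. -/
theorem subGaussian_daviesGaffney
    {M : Type*} [MetricSpace M] [MeasurableSpace M] [BorelSpace M] (μ : Measure M)
    (hpos : ∀ (x : M) (r : ℝ), 0 < r → 0 < μ (ball x r))
    (hfin : ∀ (x : M) (r : ℝ), 0 < r → μ (ball x r) < ⊤)
    (C_D : ℝ) (hC_D : 0 < C_D)
    (hdoub : ∀ (x : M) (r : ℝ), 0 < r →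
      μ (ball x (2 * r)) ≤ ENNReal.ofReal C_D * μ (ball x r))
    (m c C₀ : ℝ) (hm : 1 < m) (hc : 0 < c) (hC₀ : 0 < C₀) :
    ∃ C > (0 : ℝ), ∃ c' > (0 : ℝ), ∀ (t : ℝ), 0 < t → ∀ (xB : M) (r : ℝ), 0 < r →
      ∀ j : ℕ, 2 ≤ j → ∀ p : M → M → ℝ,
      Measurable (Function.uncurry p) → (∀ x y, 0 ≤ p x y) →
      (∀ x : M, ∀ y ∈ ball xB r,
        p x y ≤ C₀ * ((μ (ball y (t ^ (1 / m)))).toReal)⁻¹ *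
          Real.exp (-c * (dist x y ^ m / t) ^ (1 / (m - 1)))) →
      ∀ f : M → ℝ, Integrable f μ → Function.support f ⊆ ball xB r →
      ((μ (ball xB ((2 : ℝ) ^ (j + 1) * r))).toReal) ^ (-(1 : ℝ) / 2) *
          (∫ x in ball xB ((2 : ℝ) ^ (j + 1) * r) \ ball xB ((2 : ℝ) ^ j * r),
            (∫ y, p x y * f y ∂μ) ^ 2 ∂μ) ^ ((1 : ℝ) / 2)
        ≤ C * ((μ (ball xB r)).toReal)⁻¹ *
            Real.exp (-c' * (((2 : ℝ) ^ j * r) ^ m / t) ^ (1 / (m - 1))) *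
            ∫ y, |f y| ∂μ := by
  have hm0 : (0:ℝ) < m := by linarith
  have hm1 : (0:ℝ) < m - 1 := by linarith
  set D := max C_D 2 with hD
  have hD2 : (2:ℝ) ≤ D := le_max_right _ _
  have hD0 : (0:ℝ) < D := by linarith
  have hdoubD : ∀ (x : M) (r : ℝ), 0 < r →
      μ (ball x (2 * r)) ≤ ENNReal.ofReal D * μ (ball x r) := by
    intro x r hr
    exact (hdoub x r hr).trans
      (mul_le_mul_left (ENNReal.ofReal_le_ofReal (le_max_left _ _)) _)
  set β := Real.logb 2 D with hβ
  have hβ0 : (0:ℝ) < β := Real.logb_pos one_lt_two (by linarith)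
  set ε := (((2:ℝ) ^ m)⁻¹) ^ (1/(m-1)) with hε
  have hε0 : (0:ℝ) < ε := Real.rpow_pos_of_pos (by positivity) _
  set δ := c * ε / 2 with hδ
  have hδ0 : (0:ℝ) < δ := by positivity
  set C₁ := max 1 ((β/δ) ^ β) with hC₁
  have hC₁1 : (1:ℝ) ≤ C₁ := le_max_left _ _
  refine ⟨C₀ * D * C₁, by positivity, δ, hδ0, ?_⟩
  intro t ht xB r hr j hj p hpmeas hpnn hpbd f hf hsupp
  set ρ := t ^ (1/m) with hρdef
  have hρ : (0:ℝ) < ρ := Real.rpow_pos_of_pos ht _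
  have hρm : ρ ^ m = t := by
    rw [hρdef, ← Real.rpow_mul ht.le, one_div, inv_mul_cancel₀ hm0.ne', Real.rpow_one]
  set A := (((2:ℝ) ^ j * r) ^ m / t) with hA
  set a := A ^ (1/(m-1)) with ha
  have hA0 : (0:ℝ) ≤ A := by
    rw [hA]; positivity
  have ha0 : (0:ℝ) ≤ a := Real.rpow_nonneg hA0 _
  have h2j : (2:ℝ) ≤ 2 ^ j := by
    calc (2:ℝ) = 2 ^ 1 := (pow_one 2).symm
      _ ≤ 2 ^ j := pow_le_pow_right₀ (by norm_num) (by omega)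
  have hμB : (0:ℝ) < (μ (ball xB r)).toReal :=
    ENNReal.toReal_pos (hpos _ _ hr).ne' (hfin _ _ hr).ne
  set μB := (μ (ball xB r)).toReal with hμBdef
  set Q := max (2 * r / ρ) 1 with hQ
  have hQ1 : (1:ℝ) ≤ Q := le_max_right _ _
  -- volume comparison
  have hVy : ∀ y ∈ ball xB r, ((μ (ball y ρ)).toReal)⁻¹ ≤ D * Q ^ β * μB⁻¹ := by
    intro y hy
    have hsub : ball xB r ⊆ ball y (2 * r) := by
      intro z hz
      rw [mem_ball] at hz ⊢
      have h1 : dist z y ≤ dist z xB + dist xB y := dist_triangle _ _ _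
      have h2 : dist xB y < r := by rw [dist_comm]; exact hy
      linarith
    have hVρ : (0:ℝ) < (μ (ball y ρ)).toReal :=
      ENNReal.toReal_pos (hpos _ _ hρ).ne' (hfin _ _ hρ).ne
    have h1 : μB ≤ (μ (ball y (2*r))).toReal :=
      ENNReal.toReal_mono (hfin _ _ (by positivity)).ne (measure_mono hsub)
    have h2 := vol_comp_aux μ hfin hD2 hdoubD y (R := 2*r) hρ
    have h3 : μB ≤ D * Q ^ β * (μ (ball y ρ)).toReal := h1.trans h2
    have h5 : 1 / (μ (ball y ρ)).toReal ≤ (D * Q ^ β) / μB := by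
      rw [div_le_div_iff₀ hVρ hμB]; nlinarith
    calc ((μ (ball y ρ)).toReal)⁻¹ = 1 / (μ (ball y ρ)).toReal := (one_div _).symm
      _ ≤ (D * Q ^ β) / μB := h5
      _ = D * Q ^ β * μB⁻¹ := div_eq_mul_inv _ _
  -- Q^β ≤ C₁ exp(δ a)
  have hQβ : Q ^ β ≤ C₁ * Real.exp (δ * a) := by
    rcases le_or_gt (2 * r / ρ) 1 with h | h
    · have hQeq : Q = 1 := max_eq_right h
      rw [hQeq, Real.one_rpow]
      have : (1:ℝ) ≤ Real.exp (δ * a) := Real.one_le_exp (by positivity)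
      nlinarith
    · have hQeq : Q = 2 * r / ρ := max_eq_left h.le
      have hQ0 : (0:ℝ) < Q := by linarith
      have hQa : Q ≤ a := by
        have hAQ : Q ^ m ≤ A := by
          have e1 : Q ^ m = (2*r) ^ m / t := by
            rw [hQeq, Real.div_rpow (by positivity) hρ.le, hρm]
          have e2 : (2*r) ^ m ≤ ((2:ℝ) ^ j * r) ^ m :=
            Real.rpow_le_rpow (by positivity)
              (mul_le_mul_of_nonneg_right h2j hr.le) hm0.le
          rw [e1, hA]
          exact div_le_div_of_nonneg_right e2 ht.le
        calc Q = Q ^ (1:ℝ) := (Real.rpow_one Q).symm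
          _ ≤ Q ^ (m * (1/(m-1))) := by
              apply Real.rpow_le_rpow_of_exponent_le hQ1
              rw [mul_one_div, le_div_iff₀ hm1]; linarith
          _ = (Q ^ m) ^ (1/(m-1)) := Real.rpow_mul hQ0.le _ _
          _ ≤ A ^ (1/(m-1)) := Real.rpow_le_rpow (by positivity) hAQ (by positivity)
          _ = a := rfl
      calc Q ^ β ≤ (β/δ) ^ β * Real.exp (δ * Q) := rpow_le_exp_aux hβ0 hδ0 hQ0.le
        _ ≤ C₁ * Real.exp (δ * a) := by
            apply mul_le_mul (le_max_right _ _)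
              (Real.exp_le_exp.2 (by nlinarith)) (Real.exp_pos _).le (by linarith)
  -- exponential decay from distance
  have hexp : ∀ x, x ∉ ball xB ((2:ℝ) ^ j * r) → ∀ y ∈ ball xB r,
      Real.exp (-c * (dist x y ^ m / t) ^ (1/(m-1))) ≤ Real.exp (-(c * ε) * a) := by
    intro x hx y hy
    have hdxB : (2:ℝ) ^ j * r ≤ dist x xB := le_of_not_gt (fun hlt => hx (mem_ball.2 hlt))
    have hyxB : dist xB y < r := by rw [dist_comm]; exact (mem_ball.1 hy)
    have hrle : r ≤ (2:ℝ) ^ j * r / 2 := by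
      rw [le_div_iff₀ (by norm_num : (0:ℝ) < 2)]; nlinarith
    have hd : (2:ℝ) ^ j * r / 2 ≤ dist x y := by
      have h1 : dist x xB ≤ dist x y + dist y xB := dist_triangle _ _ _
      have h2 : dist y xB = dist xB y := dist_comm _ _
      linarith
    have hd0 : (0:ℝ) ≤ (2:ℝ) ^ j * r / 2 := by positivity
    have hkey : ε * a ≤ (dist x y ^ m / t) ^ (1/(m-1)) := by
      have h1 : A * ((2:ℝ) ^ m)⁻¹ ≤ dist x y ^ m / t := by
        have e1 : ((2:ℝ) ^ j * r / 2) ^ m = ((2:ℝ) ^ j * r) ^ m / (2:ℝ) ^ m :=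
          Real.div_rpow (by positivity) (by norm_num : (0:ℝ) ≤ 2) m
        have e2 : ((2:ℝ) ^ j * r / 2) ^ m ≤ dist x y ^ m :=
          Real.rpow_le_rpow hd0 hd hm0.le
        rw [hA]
        rw [e1] at e2
        rw [div_eq_mul_inv, div_eq_mul_inv, mul_right_comm]
        rw [div_eq_mul_inv] at e2
        exact mul_le_mul_of_nonneg_right e2 (by positivity)
      calc ε * a = a * ε := mul_comm _ _
        _ = (A * ((2:ℝ) ^ m)⁻¹) ^ (1/(m-1)) := by
            rw [ha, hε, ← Real.mul_rpow hA0 (by positivity)]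
        _ ≤ (dist x y ^ m / t) ^ (1/(m-1)) :=
            Real.rpow_le_rpow (by positivity) h1 (by positivity)
    apply Real.exp_le_exp.2
    nlinarith
  -- kernel bound
  set G := C₀ * D * C₁ * μB⁻¹ * Real.exp (-δ * a) with hG
  have hG0 : (0:ℝ) ≤ G := by positivity
  have hker : ∀ x, x ∉ ball xB ((2:ℝ) ^ j * r) → ∀ y ∈ ball xB r, p x y ≤ G := by
    intro x hx y hy
    have hVρ0 : (0:ℝ) ≤ ((μ (ball y ρ)).toReal)⁻¹ := by positivity
    calc p x y ≤ C₀ * ((μ (ball y ρ)).toReal)⁻¹ *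
          Real.exp (-c * (dist x y ^ m / t) ^ (1/(m-1))) := hpbd x y hy
      _ ≤ C₀ * (D * Q ^ β * μB⁻¹) * Real.exp (-(c*ε) * a) := by
          apply mul_le_mul
          · exact mul_le_mul_of_nonneg_left (hVy y hy) hC₀.le
          · exact hexp x hx y hy
          · exact (Real.exp_pos _).le
          · positivity
      _ ≤ C₀ * (D * (C₁ * Real.exp (δ * a)) * μB⁻¹) * Real.exp (-(c*ε) * a) := by
          apply mul_le_mul_of_nonneg_right _ (Real.exp_pos _).le
          apply mul_le_mul_of_nonneg_left _ hC₀.le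
          apply mul_le_mul_of_nonneg_right _ (by positivity)
          exact mul_le_mul_of_nonneg_left hQβ hD0.le
      _ = C₀ * D * C₁ * μB⁻¹ * (Real.exp (δ * a) * Real.exp (-(c*ε) * a)) := by ring
      _ = G := by
          rw [hG, ← Real.exp_add]
          congr 1
          rw [hδ]; ring
  -- pointwise bound on Pf
  have hIf0 : (0:ℝ) ≤ ∫ y, |f y| ∂μ := integral_nonneg (fun y => abs_nonneg _)
  have hpt : ∀ x, x ∉ ball xB ((2:ℝ) ^ j * r) →
      |∫ y, p x y * f y ∂μ| ≤ G * ∫ y, |f y| ∂μ := by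
    intro x hx
    have h1 : |∫ y, p x y * f y ∂μ| ≤ ∫ y, |p x y| * |f y| ∂μ := by
      simpa [Real.norm_eq_abs, abs_mul] using
        norm_integral_le_integral_norm (μ := μ) (f := fun y => p x y * f y)
    have h2 : ∫ y, |p x y| * |f y| ∂μ ≤ ∫ y, G * |f y| ∂μ := by
      apply integral_mono_of_nonneg
      · exact Filter.Eventually.of_forall (fun y => mul_nonneg (abs_nonneg _) (abs_nonneg _))
      · exact hf.abs.const_mul G
      · apply Filter.Eventually.of_forall
        intro y
        by_cases hfy : f y = 0
        · show |p x y| * |f y| ≤ G * |f y|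
          simp [hfy]
        · have hyB : y ∈ ball xB r := hsupp hfy
          show |p x y| * |f y| ≤ G * |f y|
          rw [abs_of_nonneg (hpnn x y)]
          exact mul_le_mul_of_nonneg_right (hker x hx y hyB) (abs_nonneg _)
    rw [integral_const_mul] at h2
    exact h1.trans h2
  -- the L² step
  set S := ball xB ((2:ℝ) ^ (j+1) * r) \ ball xB ((2:ℝ) ^ j * r) with hS
  have hSmeas : MeasurableSet S := measurableSet_ball.diff measurableSet_ball
  set K := G * ∫ y, |f y| ∂μ with hK
  have hK0 : (0:ℝ) ≤ K := mul_nonneg hG0 hIf0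
  have hr2 : (0:ℝ) < (2:ℝ) ^ (j+1) * r := by positivity
  have hμ₂ : (0:ℝ) < (μ (ball xB ((2:ℝ) ^ (j+1) * r))).toReal :=
    ENNReal.toReal_pos (hpos _ _ hr2).ne' (hfin _ _ hr2).ne
  set μ₂ := (μ (ball xB ((2:ℝ) ^ (j+1) * r))).toReal with hμ₂def
  set I := ∫ x in S, (∫ y, p x y * f y ∂μ) ^ 2 ∂μ with hI
  have hI0 : (0:ℝ) ≤ I :=
    setIntegral_nonneg hSmeas (fun x _ => sq_nonneg _)
  have hμS : (μ S).toReal ≤ μ₂ := by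
    apply ENNReal.toReal_mono (hfin _ _ hr2).ne
    exact measure_mono diff_subset
  have hIK : I ≤ K ^ 2 * μ₂ := by
    by_cases hInt : IntegrableOn (fun x => (∫ y, p x y * f y ∂μ) ^ 2) S μ
    · have hμSfin : μ S ≠ ⊤ :=
        ((measure_mono (diff_subset)).trans_lt (hfin _ _ hr2)).ne
      have hb : ∀ x ∈ S, (∫ y, p x y * f y ∂μ) ^ 2 ≤ K ^ 2 := by
        intro x hx
        have hx2 : x ∉ ball xB ((2:ℝ) ^ j * r) := hx.2
        have := hpt x hx2
        have habs : |∫ y, p x y * f y ∂μ| ≤ K := this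
        nlinarith [abs_nonneg (∫ y, p x y * f y ∂μ), le_abs_self (∫ y, p x y * f y ∂μ),
          neg_abs_le (∫ y, p x y * f y ∂μ)]
      calc I ≤ ∫ _ in S, K ^ 2 ∂μ :=
            setIntegral_mono_on hInt (integrableOn_const hμSfin)
              hSmeas hb
        _ = (μ S).toReal * K ^ 2 := by rw [setIntegral_const, smul_eq_mul]; rfl
        _ ≤ K ^ 2 * μ₂ := by nlinarith [sq_nonneg K, ENNReal.toReal_nonneg (a := μ S)]
    · rw [hI, integral_undef hInt]
      positivity
  -- combine
  have hfinal : μ₂ ^ (-(1:ℝ)/2) * I ^ ((1:ℝ)/2) ≤ K := by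
    have h1 : I ^ ((1:ℝ)/2) ≤ (K ^ 2 * μ₂) ^ ((1:ℝ)/2) :=
      Real.rpow_le_rpow hI0 hIK (by norm_num)
    have h2 : (K ^ 2 * μ₂) ^ ((1:ℝ)/2) = K * μ₂ ^ ((1:ℝ)/2) := by
      rw [Real.mul_rpow (sq_nonneg K) hμ₂.le]
      congr 1
      have : (K:ℝ) ^ 2 = K ^ (2:ℝ) := by
        rw [← Real.rpow_natCast K 2]; norm_num
      rw [this, ← Real.rpow_mul hK0]
      norm_num
    calc μ₂ ^ (-(1:ℝ)/2) * I ^ ((1:ℝ)/2)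
        ≤ μ₂ ^ (-(1:ℝ)/2) * (K * μ₂ ^ ((1:ℝ)/2)) := by
          rw [← h2]
          exact mul_le_mul_of_nonneg_left h1 (Real.rpow_nonneg hμ₂.le _)
      _ = K * (μ₂ ^ (-(1:ℝ)/2 + (1:ℝ)/2)) := by
          rw [Real.rpow_add hμ₂]; ring
      _ = K := by norm_num
  calc μ₂ ^ (-(1:ℝ)/2) * I ^ ((1:ℝ)/2) ≤ K := hfinal
    _ = C₀ * D * C₁ * μB⁻¹ * Real.exp (-δ * a) * ∫ y, |f y| ∂μ := by rw [hK, hG]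
end

section
/- Let (M,d,μ) be a metric measure space satisfying the doubling volume property, let c > 0 and C₀ > 0. Then there exist constants C > 0 and c' > 0 such that the following holds: for every t > 0, every ball B = B(x_B, r) of radius r > 0, every integer j ≥ 2, every measurable kernel p : M × M → [0,∞) satisfying p(x,y) ≤ C₀ · V(y,t^{1/2})^{-1} · exp(−c d(x,y)²/t) for all x ∈ M and y ∈ B, and every f ∈ L¹(M,μ) supported in B, the function P f(x) := ∫_M p(x,y) f(y) dμ(y) satisfies μ(2^{j+1}B)^{−1/2} · ‖P f‖_{L²(C_j(B))} ≤ C · μ(B)^{−1} · exp(−c' · 4^j r² / t) · ‖f‖_{L¹}. -/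
open MeasureTheory Metric Set

set_option maxHeartbeats 1000000

/-- Gaussian Davies–Gaffney estimate: on a doubling metric measure space, if the kernel `p`
satisfies `p(x,y) ≤ C₀ V(y,t^{1/2})⁻¹ exp(−c d(x,y)²/t)` for `y ∈ B = B(x_B,r)`, then for
`f ∈ L¹` supported in `B` and `j ≥ 2`,
`μ(2^{j+1}B)^{−1/2} ‖Pf‖_{L²(C_j(B))} ≤ C μ(B)⁻¹ exp(−c' 4^j r²/t) ‖f‖₁`. -/
theorem gaussian_daviesGaffney
    {M : Type*} [MetricSpace M] [MeasurableSpace M] [BorelSpace M] (μ : Measure M)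
    (hpos : ∀ (x : M) (r : ℝ), 0 < r → 0 < μ (ball x r))
    (hfin : ∀ (x : M) (r : ℝ), 0 < r → μ (ball x r) < ⊤)
    (C_D : ℝ) (hC_D : 0 < C_D)
    (hdoub : ∀ (x : M) (r : ℝ), 0 < r →
      μ (ball x (2 * r)) ≤ ENNReal.ofReal C_D * μ (ball x r))
    (c C₀ : ℝ) (hc : 0 < c) (hC₀ : 0 < C₀) :
    ∃ C > (0 : ℝ), ∃ c' > (0 : ℝ), ∀ (t : ℝ), 0 < t → ∀ (xB : M) (r : ℝ), 0 < r →
      ∀ j : ℕ, 2 ≤ j → ∀ p : M → M → ℝ,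
      Measurable (Function.uncurry p) → (∀ x y, 0 ≤ p x y) →
      (∀ x : M, ∀ y ∈ ball xB r,
        p x y ≤ C₀ * ((μ (ball y (t ^ ((1 : ℝ) / 2)))).toReal)⁻¹ *
          Real.exp (-c * dist x y ^ 2 / t)) →
      ∀ f : M → ℝ, Integrable f μ → Function.support f ⊆ ball xB r →
      ((μ (ball xB ((2 : ℝ) ^ (j + 1) * r))).toReal) ^ (-(1 : ℝ) / 2) *
          (∫ x in ball xB ((2 : ℝ) ^ (j + 1) * r) \ ball xB ((2 : ℝ) ^ j * r),
            (∫ y, p x y * f y ∂μ) ^ 2 ∂μ) ^ ((1 : ℝ) / 2)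
        ≤ C * ((μ (ball xB r)).toReal)⁻¹ *
            Real.exp (-c' * (4 : ℝ) ^ j * r ^ 2 / t) *
            ∫ y, |f y| ∂μ := by
  -- enlarged doubling constant
  set D : ℝ := max C_D 2 with hD_def
  have hD2 : (2:ℝ) ≤ D := le_max_right _ _
  have hD1 : (1:ℝ) ≤ D := by linarith
  have hD0 : (0:ℝ) < D := by linarith
  set ν : ℝ := Real.logb 2 D with hν_def
  have hν : 0 ≤ ν := Real.logb_nonneg one_lt_two hD1
  set K : ℝ := Real.exp (ν ^ 2 / (2 * c)) with hK_def
  have hK0 : 0 < K := Real.exp_pos _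
  refine ⟨C₀ * D * K, by positivity, c / 8, by positivity, ?_⟩
  intro t ht xB r hr j hj p hpmeas hpnn hp f hf hsupp
  obtain ⟨k, rfl⟩ : ∃ k, j = k + 2 := ⟨j - 2, by omega⟩
  set s : ℝ := t ^ ((1:ℝ)/2) with hs_def
  have hs0 : 0 < s := Real.rpow_pos_of_pos ht _
  have hs2 : s ^ 2 = t := by
    rw [hs_def, ← Real.rpow_natCast (t ^ ((1:ℝ)/2)) 2, ← Real.rpow_mul ht.le]
    norm_num
  -- iterated doubling
  have hiter : ∀ (y : M) (u : ℝ), 0 < u → ∀ n : ℕ,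
      μ (ball y (2 ^ n * u)) ≤ ENNReal.ofReal (D ^ n) * μ (ball y u) := by
    intro y u hu n
    induction n with
    | zero => simp
    | succ n ih =>
      have h2 : (2:ℝ) ^ (n+1) * u = 2 * (2 ^ n * u) := by ring
      rw [h2]
      calc μ (ball y (2 * (2 ^ n * u)))
          ≤ ENNReal.ofReal C_D * μ (ball y (2 ^ n * u)) := hdoub y _ (by positivity)
        _ ≤ ENNReal.ofReal D * (ENNReal.ofReal (D ^ n) * μ (ball y u)) := by
            gcongr
            · exact le_max_left _ _
        _ = ENNReal.ofReal (D ^ (n+1)) * μ (ball y u) := by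
            rw [← mul_assoc, ← ENNReal.ofReal_mul hD0.le, ← pow_succ']
  -- volume comparison: for y ∈ B, μ(B(y,s))⁻¹ ≤ G μ(B)⁻¹
  set w : ℝ := r / s with hw_def
  have hw0 : 0 < w := div_pos hr hs0
  set G : ℝ := D * (1 + 2 * w) ^ ν with hG_def
  have h12w : (0:ℝ) < (1 + 2 * w) ^ ν := Real.rpow_pos_of_pos (by linarith) _
  have hG0 : 0 < G := by rw [hG_def]; positivity
  have hμB0 : 0 < (μ (ball xB r)).toReal :=
    ENNReal.toReal_pos (hpos xB r hr).ne' (hfin xB r hr).ne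
  have hvol : ∀ y ∈ ball xB r,
      ((μ (ball y s)).toReal)⁻¹ ≤ G * ((μ (ball xB r)).toReal)⁻¹ := by
    intro y hy
    set n : ℕ := ⌈Real.logb 2 (2 * w)⌉₊ with hn_def
    have h2n : 2 * w ≤ (2:ℝ) ^ n := by
      rcases le_or_gt (2 * w) 1 with h | h
      · exact h.trans (one_le_pow₀ one_le_two)
      · calc 2 * w = (2:ℝ) ^ (Real.logb 2 (2 * w)) :=
              (Real.rpow_logb two_pos (by norm_num) (by positivity)).symm
          _ ≤ (2:ℝ) ^ ((n:ℝ)) :=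
              Real.rpow_le_rpow_of_exponent_le one_le_two (Nat.le_ceil _)
          _ = (2:ℝ) ^ n := Real.rpow_natCast 2 n
    have hsub : ball xB r ⊆ ball y ((2:ℝ) ^ n * s) := by
      intro z hz
      rw [mem_ball] at hz hy ⊢
      have h1 : dist z y ≤ dist z xB + dist xB y := dist_triangle z xB y
      have h2 : dist xB y = dist y xB := dist_comm _ _
      have h3 : 2 * w * s ≤ 2 ^ n * s := mul_le_mul_of_nonneg_right h2n hs0.le
      have h4 : 2 * w * s = 2 * r := by rw [hw_def]; field_simp
      linarith
    have h1 : μ (ball xB r) ≤ ENNReal.ofReal (D ^ n) * μ (ball y s) :=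
      (measure_mono hsub).trans (hiter y s hs0 n)
    have hDn : (D:ℝ) ^ n ≤ G := by
      rcases le_or_gt (2 * w) 1 with h | h
      · have hn0 : n = 0 := by
          rw [hn_def, Nat.ceil_eq_zero]
          exact Real.logb_nonpos one_lt_two (by positivity) h
        rw [hn0, pow_zero, hG_def]
        have h1' : (1:ℝ) ≤ (1 + 2 * w) ^ ν := Real.one_le_rpow (by linarith) hν
        nlinarith
      · have hlb : 0 ≤ Real.logb 2 (2 * w) := Real.logb_nonneg one_lt_two h.le
        have hn_le : (n:ℝ) ≤ Real.logb 2 (2 * w) + 1 := (Nat.ceil_lt_add_one hlb).le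
        have key : (D:ℝ) ^ n ≤ D * (2 * w) ^ ν := by
          calc (D:ℝ) ^ n = D ^ ((n:ℝ)) := (Real.rpow_natCast D n).symm
            _ ≤ D ^ (Real.logb 2 (2 * w) + 1) :=
                Real.rpow_le_rpow_of_exponent_le hD1 hn_le
            _ = D ^ (Real.logb 2 (2 * w)) * D := by
                rw [Real.rpow_add hD0, Real.rpow_one]
            _ = D * (2 * w) ^ ν := by
                rw [mul_comm]
                congr 1
                rw [Real.rpow_def_of_pos hD0, Real.rpow_def_of_pos (by positivity : (0:ℝ) < 2*w),
                  hν_def, Real.logb, Real.logb]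
                ring_nf
        refine key.trans ?_
        rw [hG_def]
        have h5 : (2 * w) ^ ν ≤ (1 + 2 * w) ^ ν :=
          Real.rpow_le_rpow (by positivity) (by linarith) hν
        nlinarith
    have hμy0 : 0 < (μ (ball y s)).toReal :=
      ENNReal.toReal_pos (hpos y s hs0).ne' (hfin y s hs0).ne
    have h2 : (μ (ball xB r)).toReal ≤ G * (μ (ball y s)).toReal := by
      have h3 : (μ (ball xB r)).toReal ≤ (ENNReal.ofReal (D ^ n) * μ (ball y s)).toReal := by
        apply ENNReal.toReal_mono _ h1
        exact ENNReal.mul_ne_top ENNReal.ofReal_ne_top (hfin y s hs0).ne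
      rw [ENNReal.toReal_mul, ENNReal.toReal_ofReal (by positivity)] at h3
      exact h3.trans (mul_le_mul_of_nonneg_right hDn hμy0.le)
    rw [show G * ((μ (ball xB r)).toReal)⁻¹ = ((μ (ball xB r)).toReal / G)⁻¹ by field_simp]
    gcongr
    rw [div_le_iff₀ hG0]
    linarith
  -- abbreviations
  set u : ℝ := r ^ 2 / t with hu_def
  have hu0 : 0 < u := by positivity
  have hwu : w ^ 2 = u := by rw [hw_def, div_pow, hs2, hu_def]
  have h4k1 : (1:ℝ) ≤ 4 ^ k := one_le_pow₀ (by norm_num)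
  have h2k1 : (1:ℝ) ≤ 2 ^ k := one_le_pow₀ one_le_two
  set EX : ℝ := Real.exp (-(c / 8) * (4:ℝ) ^ (k+2) * r ^ 2 / t) with hEX_def
  have hEX0 : 0 < EX := Real.exp_pos _
  set Mb : ℝ := C₀ * D * K * ((μ (ball xB r)).toReal)⁻¹ * EX with hMb_def
  have hMb0 : 0 < Mb := by rw [hMb_def]; positivity
  -- absorption of the polynomial factor into the exponential
  have habs : (1 + 2*w) ^ ν * Real.exp (-c * (4 * 4 ^ k * r ^ 2) / t) ≤ K * EX := by
    have e1 : (1 + 2*w) ^ ν ≤ Real.exp (2*w*ν) := by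
      have h1 : 1 + 2*w ≤ Real.exp (2*w) := by linarith [Real.add_one_le_exp (2*w)]
      calc (1 + 2*w) ^ ν ≤ (Real.exp (2*w)) ^ ν := Real.rpow_le_rpow (by positivity) h1 hν
        _ = Real.exp (2*w*ν) := (Real.exp_mul _ _).symm
    have e2 : 2*w*ν ≤ ν^2/(2*c) + 2*c*w^2 := by
      have hd : ν^2/(2*c) + 2*c*w^2 - 2*w*ν = (ν - 2*c*w)^2/(2*c) := by
        field_simp; ring
      nlinarith [div_nonneg (sq_nonneg (ν - 2*c*w)) (by positivity : (0:ℝ) ≤ 2*c)]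
    have e3 : (1 + 2*w) ^ ν ≤ K * Real.exp (2*c*u) := by
      calc (1 + 2*w) ^ ν ≤ Real.exp (2*w*ν) := e1
        _ ≤ Real.exp (ν^2/(2*c) + 2*c*w^2) := Real.exp_le_exp.2 e2
        _ = K * Real.exp (2*c*u) := by rw [hK_def, ← Real.exp_add, hwu]
    have e4 : Real.exp (2*c*u) * Real.exp (-c * (4 * 4 ^ k * r ^ 2) / t) ≤ EX := by
      rw [← Real.exp_add, hEX_def]
      apply Real.exp_le_exp.2
      have hrt : -c * (4 * 4 ^ k * r ^ 2) / t = -(4*c) * (4 ^ k * u) := by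
        rw [hu_def]; ring
      have hrt2 : -(c / 8) * (4:ℝ) ^ (k+2) * r ^ 2 / t = -(2*c) * (4 ^ k * u) := by
        rw [hu_def]; ring
      rw [hrt, hrt2]
      have hint : 0 ≤ c * u * ((4:ℝ) ^ k - 1) :=
        mul_nonneg (mul_nonneg hc.le hu0.le) (by linarith)
      nlinarith [hint]
    calc (1 + 2*w) ^ ν * Real.exp (-c * (4 * 4 ^ k * r ^ 2) / t)
        ≤ (K * Real.exp (2*c*u)) * Real.exp (-c * (4 * 4 ^ k * r ^ 2) / t) :=
          mul_le_mul_of_nonneg_right e3 (Real.exp_pos _).le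
      _ = K * (Real.exp (2*c*u) * Real.exp (-c * (4 * 4 ^ k * r ^ 2) / t)) := by ring
      _ ≤ K * EX := mul_le_mul_of_nonneg_left e4 hK0.le
  -- kernel bound on the annulus
  have hker : ∀ x : M, (2:ℝ) ^ (k+2) * r ≤ dist x xB → ∀ y ∈ ball xB r, p x y ≤ Mb := by
    intro x hx y hy
    have hdy : dist y xB < r := mem_ball.mp hy
    have hd : 2 * 2 ^ k * r ≤ dist x y := by
      have htri : dist x xB ≤ dist x y + dist y xB := dist_triangle x y xB
      have h42 : (2:ℝ) ^ (k+2) = 4 * 2 ^ k := by ring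
      nlinarith
    have hdsq : 4 * 4 ^ k * r ^ 2 ≤ dist x y ^ 2 := by
      have h6 := pow_le_pow_left₀ (by positivity : (0:ℝ) ≤ 2 * 2 ^ k * r) hd 2
      have h4 : ((2:ℝ) ^ k) ^ 2 = 4 ^ k := by
        rw [← pow_mul, mul_comm, pow_mul]; norm_num
      nlinarith
    have hexp1 : Real.exp (-c * dist x y ^ 2 / t) ≤ Real.exp (-c * (4 * 4 ^ k * r ^ 2) / t) := by
      apply Real.exp_le_exp.2
      rw [div_le_div_iff_of_pos_right ht]
      nlinarith
    calc p x y ≤ C₀ * ((μ (ball y s)).toReal)⁻¹ * Real.exp (-c * dist x y ^ 2 / t) :=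
          hp x y hy
      _ ≤ C₀ * (G * ((μ (ball xB r)).toReal)⁻¹) * Real.exp (-c * (4 * 4 ^ k * r ^ 2) / t) := by
          apply mul_le_mul _ hexp1 (Real.exp_pos _).le (by positivity)
          exact mul_le_mul_of_nonneg_left (hvol y hy) hC₀.le
      _ = (C₀ * D * ((μ (ball xB r)).toReal)⁻¹) *
            ((1 + 2*w) ^ ν * Real.exp (-c * (4 * 4 ^ k * r ^ 2) / t)) := by
          rw [hG_def]; ring
      _ ≤ (C₀ * D * ((μ (ball xB r)).toReal)⁻¹) * (K * EX) :=
          mul_le_mul_of_nonneg_left habs (by positivity)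
      _ = Mb := by rw [hMb_def]; ring
  -- pointwise bound on Pf
  have hPf : ∀ x : M, (2:ℝ) ^ (k+2) * r ≤ dist x xB →
      |∫ y, p x y * f y ∂μ| ≤ Mb * ∫ y, |f y| ∂μ := by
    intro x hx
    have h1 : |∫ y, p x y * f y ∂μ| ≤ ∫ y, |p x y| * |f y| ∂μ := by
      simpa [Real.norm_eq_abs, abs_mul] using
        norm_integral_le_integral_norm (μ := μ) (fun y => p x y * f y)
    refine h1.trans ?_
    have h2 : ∫ y, |p x y| * |f y| ∂μ ≤ ∫ y, Mb * |f y| ∂μ := by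
      apply integral_mono_of_nonneg (Filter.Eventually.of_forall fun y => by positivity)
        ((hf.abs).const_mul Mb) (Filter.Eventually.of_forall ?_)
      intro y
      show |p x y| * |f y| ≤ Mb * |f y|
      by_cases hy : y ∈ ball xB r
      · rw [abs_of_nonneg (hpnn x y)]
        exact mul_le_mul_of_nonneg_right (hker x hx y hy) (abs_nonneg _)
      · have hfy : f y = 0 := Function.notMem_support.mp (fun hsy => hy (hsupp hsy))
        simp [hfy]
    rwa [integral_const_mul] at h2
  -- the L² estimate
  set A : Set M := ball xB ((2:ℝ) ^ (k+2+1) * r) \ ball xB ((2:ℝ) ^ (k+2) * r) with hA_def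
  have hAmeas : MeasurableSet A := measurableSet_ball.diff measurableSet_ball
  have hbigfin : μ (ball xB ((2:ℝ) ^ (k+2+1) * r)) < ⊤ := hfin xB _ (by positivity)
  set Bt : ℝ := (μ (ball xB ((2:ℝ) ^ (k+2+1) * r))).toReal with hBt_def
  have hBt0 : 0 < Bt :=
    ENNReal.toReal_pos (hpos xB _ (by positivity)).ne' hbigfin.ne
  have hAfin : μ A < ⊤ := lt_of_le_of_lt (measure_mono diff_subset) hbigfin
  have hAle : (μ A).toReal ≤ Bt :=
    ENNReal.toReal_mono hbigfin.ne (measure_mono diff_subset)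
  set N : ℝ := Mb * ∫ y, |f y| ∂μ with hN_def
  have hN0 : 0 ≤ N := mul_nonneg hMb0.le (integral_nonneg fun y => abs_nonneg _)
  have hptA : ∀ x ∈ A, (∫ y, p x y * f y ∂μ) ^ 2 ≤ N ^ 2 := by
    intro x hxA
    have hx : (2:ℝ) ^ (k+2) * r ≤ dist x xB := by
      have := hxA.2
      rw [mem_ball, not_lt] at this
      exact this
    calc (∫ y, p x y * f y ∂μ) ^ 2 = |∫ y, p x y * f y ∂μ| ^ 2 := (sq_abs _).symm
      _ ≤ N ^ 2 := pow_le_pow_left₀ (abs_nonneg _) (hPf x hx) 2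
  have hI0 : 0 ≤ ∫ x in A, (∫ y, p x y * f y ∂μ) ^ 2 ∂μ :=
    setIntegral_nonneg hAmeas fun x _ => sq_nonneg _
  have hI : ∫ x in A, (∫ y, p x y * f y ∂μ) ^ 2 ∂μ ≤ Bt * N ^ 2 := by
    by_cases hInt : IntegrableOn (fun x => (∫ y, p x y * f y ∂μ) ^ 2) A μ
    · calc ∫ x in A, (∫ y, p x y * f y ∂μ) ^ 2 ∂μ
          ≤ ∫ _x in A, N ^ 2 ∂μ :=
            setIntegral_mono_on hInt (integrableOn_const hAfin.ne) hAmeas hptA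
        _ = (μ A).toReal * N ^ 2 := by rw [setIntegral_const, smul_eq_mul]; rfl
        _ ≤ Bt * N ^ 2 := mul_le_mul_of_nonneg_right hAle (sq_nonneg _)
    · rw [integral_undef hInt]
      exact mul_nonneg hBt0.le (sq_nonneg _)
  have hfinal : Bt ^ (-(1:ℝ)/2) *
      (∫ x in A, (∫ y, p x y * f y ∂μ) ^ 2 ∂μ) ^ ((1:ℝ)/2) ≤ N := by
    have h1 : (∫ x in A, (∫ y, p x y * f y ∂μ) ^ 2 ∂μ) ^ ((1:ℝ)/2) ≤
        (Bt * N ^ 2) ^ ((1:ℝ)/2) := Real.rpow_le_rpow hI0 hI (by norm_num)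
    have h2 : (Bt * N ^ 2) ^ ((1:ℝ)/2) = Bt ^ ((1:ℝ)/2) * N := by
      rw [Real.mul_rpow hBt0.le (sq_nonneg _)]
      congr 1
      rw [← Real.rpow_natCast N 2, ← Real.rpow_mul hN0]
      norm_num
    calc Bt ^ (-(1:ℝ)/2) * (∫ x in A, (∫ y, p x y * f y ∂μ) ^ 2 ∂μ) ^ ((1:ℝ)/2)
        ≤ Bt ^ (-(1:ℝ)/2) * (Bt ^ ((1:ℝ)/2) * N) :=
          mul_le_mul_of_nonneg_left (h1.trans_eq h2) (Real.rpow_nonneg hBt0.le _)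
      _ = (Bt ^ (-(1:ℝ)/2) * Bt ^ ((1:ℝ)/2)) * N := by ring
      _ = N := by rw [← Real.rpow_add hBt0]; norm_num
  calc ((μ (ball xB ((2:ℝ) ^ (k+2+1) * r))).toReal) ^ (-(1:ℝ)/2) *
      (∫ x in A, (∫ y, p x y * f y ∂μ) ^ 2 ∂μ) ^ ((1:ℝ)/2) ≤ N := hfinal
    _ = C₀ * D * K * ((μ (ball xB r)).toReal)⁻¹ * EX * ∫ y, |f y| ∂μ := by
        rw [hN_def, hMb_def]
end

section
/- For every α ∈ (0,1/2), every c > 0 and every β > 0 there exists a constant C > 0 such that for all t ≥ 1, ∫₀^∞ | s^{α−1} − 𝟙_{{s>t}} (s−t)^{α−1} | · (s+1)^{−α} · exp(−c (t/(s+1))^{β}) ds ≤ C. -/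
open MeasureTheory Real

private lemma exp_neg_le_inv' {y : ℝ} (hy : 0 < y) : Real.exp (-y) ≤ y⁻¹ := by
  rw [Real.exp_neg]
  have h1 : y ≤ Real.exp y := by linarith [Real.add_one_le_exp y]
  exact inv_anti₀ hy h1

private lemma mul3_le' {a b e a' b' e' : ℝ} (h1 : a ≤ a') (h2 : b ≤ b') (h3 : e ≤ e')
    (ha' : 0 ≤ a') (hb : 0 ≤ b) (he : 0 ≤ e) : a * b * e ≤ a' * b' * e' :=
  mul_le_mul (mul_le_mul h1 h2 hb ha') h3 he (mul_nonneg ha' (hb.trans h2))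

/-- For `α ∈ (0,1/2)`, `c > 0` and `β > 0`, the integral
`∫₀^∞ |s^{α−1} − 𝟙_{s>t}(s−t)^{α−1}| (s+1)^{−α} exp(−c (t/(s+1))^β) ds`
is bounded uniformly in `t ≥ 1`. -/
theorem kernel_integral_estimate_large_time (α c β : ℝ)
    (hα : α ∈ Set.Ioo (0 : ℝ) (1 / 2)) (hc : 0 < c) (hβ : 0 < β) :
    ∃ C > (0 : ℝ), ∀ t : ℝ, 1 ≤ t →
      ∫ s in Set.Ioi (0 : ℝ),
          |s ^ (α - 1) - Set.indicator (Set.Ioi t) (fun s => (s - t) ^ (α - 1)) s| *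
            (s + 1) ^ (-α) * Real.exp (-c * (t / (s + 1)) ^ β) ≤ C := by
  obtain ⟨hα0, hα2⟩ := hα
  have hα1 : α - 1 ≤ 0 := by linarith
  have hα1' : (-1 : ℝ) < α - 1 := by linarith
  have hβ1' : (-1 : ℝ) < β - 1 := by linarith
  have h2b : (0 : ℝ) < 2 ^ β := Real.rpow_pos_of_pos two_pos β
  refine ⟨2 / α + 2 ^ β / (c * β) + 1,
    add_pos (add_pos (div_pos two_pos hα0) (div_pos h2b (mul_pos hc hβ))) one_pos, fun t ht => ?_⟩
  have ht0 : (0 : ℝ) < t := lt_of_lt_of_le one_pos ht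
  have htb : (0 : ℝ) < t ^ β := Real.rpow_pos_of_pos ht0 β
  set F : ℝ → ℝ := fun s =>
    |s ^ (α - 1) - Set.indicator (Set.Ioi t) (fun s => (s - t) ^ (α - 1)) s| *
      (s + 1) ^ (-α) * Real.exp (-c * (t / (s + 1)) ^ β) with hFdef
  -- measurability
  have hmF : Measurable F := by
    apply Measurable.mul
    apply Measurable.mul
    · apply Measurable.abs
      apply Measurable.sub
      · fun_prop
      · exact Measurable.indicator (by fun_prop) measurableSet_Ioi
    · fun_prop
    · fun_prop
  -- nonnegativity on (0, ∞)
  have hFnn : ∀ s : ℝ, 0 < s → 0 ≤ F s := by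
    intro s hs
    have h1 : (0 : ℝ) ≤ (s + 1) ^ (-α) := Real.rpow_nonneg (by linarith) _
    exact mul_nonneg (mul_nonneg (abs_nonneg _) h1) (Real.exp_pos _).le
  -- the exponential factor is at most 1
  have hE1 : ∀ s : ℝ, 0 < s → Real.exp (-c * (t / (s + 1)) ^ β) ≤ 1 := by
    intro s hs
    rw [Real.exp_le_one_iff]
    have h1 : 0 ≤ (t / (s + 1)) ^ β := Real.rpow_nonneg (div_nonneg ht0.le (by linarith)) _
    nlinarith
  -- pointwise bound on (0,1]
  have hb1 : ∀ s ∈ Set.Ioc (0 : ℝ) 1, F s ≤ s ^ (α - 1) := by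
    rintro s ⟨hs0, hs1⟩
    have hind : Set.indicator (Set.Ioi t) (fun s => (s - t) ^ (α - 1)) s = 0 :=
      Set.indicator_of_notMem (by simp only [Set.mem_Ioi]; push_neg; linarith) _
    have hFs : F s = s ^ (α - 1) * (s + 1) ^ (-α) * Real.exp (-c * (t / (s + 1)) ^ β) := by
      simp only [hFdef]
      rw [hind, sub_zero, abs_of_nonneg (Real.rpow_nonneg hs0.le _)]
    rw [hFs]
    have hB : (s + 1) ^ (-α) ≤ 1 :=
      Real.rpow_le_one_of_one_le_of_nonpos (by linarith) (by linarith)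
    calc s ^ (α - 1) * (s + 1) ^ (-α) * Real.exp (-c * (t / (s + 1)) ^ β)
        ≤ s ^ (α - 1) * 1 * 1 :=
          mul3_le' le_rfl hB (hE1 s hs0) (Real.rpow_nonneg hs0.le _)
            (Real.rpow_nonneg (by linarith) _) (Real.exp_pos _).le
      _ = s ^ (α - 1) := by ring
  -- pointwise bound on (1,t]
  have hb2 : ∀ s ∈ Set.Ioc (1 : ℝ) t, F s ≤ 2 ^ β / (c * t ^ β) * s ^ (β - 1) := by
    rintro s ⟨hs1, hst⟩
    have hs0 : (0 : ℝ) < s := by linarith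
    have hs10 : (0 : ℝ) < s + 1 := by linarith
    have hind : Set.indicator (Set.Ioi t) (fun s => (s - t) ^ (α - 1)) s = 0 :=
      Set.indicator_of_notMem (by simp only [Set.mem_Ioi]; push_neg; linarith) _
    have hFs : F s = s ^ (α - 1) * (s + 1) ^ (-α) * Real.exp (-c * (t / (s + 1)) ^ β) := by
      simp only [hFdef]
      rw [hind, sub_zero, abs_of_nonneg (Real.rpow_nonneg hs0.le _)]
    rw [hFs]
    have hB : (s + 1) ^ (-α) ≤ s ^ (-α) :=
      Real.rpow_le_rpow_of_nonpos hs0 (by linarith) (by linarith)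
    have hy : 0 < c * (t / (s + 1)) ^ β :=
      mul_pos hc (Real.rpow_pos_of_pos (div_pos ht0 hs10) _)
    have hE2 : Real.exp (-c * (t / (s + 1)) ^ β) ≤ c⁻¹ * ((2 * s) / t) ^ β := by
      have h1 : Real.exp (-c * (t / (s + 1)) ^ β) ≤ (c * (t / (s + 1)) ^ β)⁻¹ := by
        rw [neg_mul]; exact exp_neg_le_inv' hy
      have h2 : (c * (t / (s + 1)) ^ β)⁻¹ = c⁻¹ * ((s + 1) / t) ^ β := by
        rw [mul_inv, ← Real.inv_rpow (div_nonneg ht0.le hs10.le), inv_div]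
      have h3 : ((s + 1) / t) ^ β ≤ ((2 * s) / t) ^ β :=
        Real.rpow_le_rpow (div_nonneg hs10.le ht0.le)
          ((div_le_div_iff_of_pos_right ht0).mpr (by linarith)) hβ.le
      calc Real.exp (-c * (t / (s + 1)) ^ β) ≤ c⁻¹ * ((s + 1) / t) ^ β := by rw [← h2]; exact h1
        _ ≤ c⁻¹ * ((2 * s) / t) ^ β :=
            mul_le_mul_of_nonneg_left h3 (inv_nonneg.mpr hc.le)
    calc s ^ (α - 1) * (s + 1) ^ (-α) * Real.exp (-c * (t / (s + 1)) ^ β)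
        ≤ s ^ (α - 1) * s ^ (-α) * (c⁻¹ * ((2 * s) / t) ^ β) :=
          mul3_le' le_rfl hB hE2 (Real.rpow_nonneg hs0.le _)
            (Real.rpow_nonneg hs10.le _) (Real.exp_pos _).le
      _ = 2 ^ β / (c * t ^ β) * s ^ (β - 1) := by
          rw [← Real.rpow_add hs0, Real.div_rpow (by linarith) ht0.le,
            Real.mul_rpow (by norm_num) hs0.le]
          have h4 : s ^ (β - 1) = s ^ β * s ^ (α - 1 + -α) := by
            rw [← Real.rpow_add hs0]; ring_nf
          rw [h4]
          field_simp
  -- pointwise bound on (t, 2t]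
  have hb3 : ∀ s ∈ Set.Ioc t (2 * t), F s ≤ t ^ (-α) * (s - t) ^ (α - 1) := by
    rintro s ⟨hts, hs2t⟩
    have hst0 : (0 : ℝ) < s - t := by linarith
    have hs0 : (0 : ℝ) < s := by linarith
    have hind : Set.indicator (Set.Ioi t) (fun s => (s - t) ^ (α - 1)) s = (s - t) ^ (α - 1) :=
      Set.indicator_of_mem hts _
    have hmono : s ^ (α - 1) ≤ (s - t) ^ (α - 1) :=
      Real.rpow_le_rpow_of_nonpos hst0 (by linarith) hα1
    have hFs : F s = ((s - t) ^ (α - 1) - s ^ (α - 1)) * (s + 1) ^ (-α) *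
        Real.exp (-c * (t / (s + 1)) ^ β) := by
      simp only [hFdef]
      rw [hind, abs_sub_comm, abs_of_nonneg (by linarith)]
    rw [hFs]
    have hA : (s - t) ^ (α - 1) - s ^ (α - 1) ≤ (s - t) ^ (α - 1) := by
      have := Real.rpow_nonneg hs0.le (α - 1); linarith
    have hB : (s + 1) ^ (-α) ≤ t ^ (-α) :=
      Real.rpow_le_rpow_of_nonpos ht0 (by linarith) (by linarith)
    calc ((s - t) ^ (α - 1) - s ^ (α - 1)) * (s + 1) ^ (-α) * Real.exp (-c * (t / (s + 1)) ^ β)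
        ≤ (s - t) ^ (α - 1) * t ^ (-α) * 1 :=
          mul3_le' hA hB (hE1 s hs0) (Real.rpow_nonneg hst0.le _)
            (Real.rpow_nonneg (by linarith) _) (Real.exp_pos _).le
      _ = t ^ (-α) * (s - t) ^ (α - 1) := by ring
  -- pointwise bound on (2t, ∞)
  have hb4 : ∀ s ∈ Set.Ioi (2 * t), F s ≤ 2 * t * s ^ (-2 : ℝ) := by
    intro s hs
    rw [Set.mem_Ioi] at hs
    have hs0 : (0 : ℝ) < s := by linarith
    have hst0 : (0 : ℝ) < s - t := by linarith
    have hind : Set.indicator (Set.Ioi t) (fun s => (s - t) ^ (α - 1)) s = (s - t) ^ (α - 1) :=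
      Set.indicator_of_mem (by simp only [Set.mem_Ioi]; linarith) _
    have hmono : s ^ (α - 1) ≤ (s - t) ^ (α - 1) :=
      Real.rpow_le_rpow_of_nonpos hst0 (by linarith) hα1
    have hFs : F s = ((s - t) ^ (α - 1) - s ^ (α - 1)) * (s + 1) ^ (-α) *
        Real.exp (-c * (t / (s + 1)) ^ β) := by
      simp only [hFdef]
      rw [hind, abs_sub_comm, abs_of_nonneg (by linarith)]
    rw [hFs]
    have hkey : (s - t) ^ (α - 1) - s ^ (α - 1) ≤ t * s ^ (α - 1) / (s - t) := by
      have h1 : (s - t) ^ (α - 1) = (s - t) ^ α / (s - t) := by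
        rw [eq_div_iff hst0.ne', ← Real.rpow_add_one hst0.ne']
        ring_nf
      have h2 : (s - t) ^ α ≤ s ^ α := Real.rpow_le_rpow hst0.le (by linarith) hα0.le
      have h3 : s ^ α = s ^ (α - 1) * s := by
        rw [← Real.rpow_add_one hs0.ne']; ring_nf
      rw [sub_le_iff_le_add, h1]
      calc (s - t) ^ α / (s - t) ≤ s ^ α / (s - t) := by gcongr
        _ = t * s ^ (α - 1) / (s - t) + s ^ (α - 1) := by
            rw [h3]; field_simp; ring
    have hB : (s + 1) ^ (-α) ≤ s ^ (-α) :=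
      Real.rpow_le_rpow_of_nonpos hs0 (by linarith) (by linarith)
    have hA' : 0 ≤ t * s ^ (α - 1) / (s - t) :=
      div_nonneg (mul_nonneg ht0.le (Real.rpow_nonneg hs0.le _)) hst0.le
    have hsinv : s ^ (α - 1) * s ^ (-α) = s⁻¹ := by
      rw [← Real.rpow_add hs0, show α - 1 + -α = -1 by ring, Real.rpow_neg_one]
    calc ((s - t) ^ (α - 1) - s ^ (α - 1)) * (s + 1) ^ (-α) * Real.exp (-c * (t / (s + 1)) ^ β)
        ≤ (t * s ^ (α - 1) / (s - t)) * s ^ (-α) * 1 :=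
          mul3_le' hkey hB (hE1 s hs0) hA'
            (Real.rpow_nonneg (by linarith) _) (Real.exp_pos _).le
      _ = t * s⁻¹ / (s - t) := by
          rw [mul_one, div_mul_eq_mul_div, mul_assoc, hsinv]
      _ ≤ t * s⁻¹ / (s / 2) := by
          apply div_le_div_of_nonneg_left (mul_nonneg ht0.le (inv_nonneg.mpr hs0.le))
            (by linarith) (by linarith)
      _ = 2 * t * s ^ (-2 : ℝ) := by
          rw [show (-2 : ℝ) = -1 + -1 by norm_num, Real.rpow_add hs0, Real.rpow_neg_one]
          field_simp
  -- integrability of the bounding functions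
  have hg1 : IntegrableOn (fun s : ℝ => s ^ (α - 1)) (Set.Ioc (0 : ℝ) 1) :=
    (intervalIntegral.intervalIntegrable_rpow' hα1').1
  have hg2 : IntegrableOn (fun s : ℝ => 2 ^ β / (c * t ^ β) * s ^ (β - 1))
      (Set.Ioc (1 : ℝ) t) :=
    ((intervalIntegral.intervalIntegrable_rpow' hβ1').1).const_mul _
  have hg3 : IntegrableOn (fun s : ℝ => t ^ (-α) * (s - t) ^ (α - 1))
      (Set.Ioc t (2 * t)) := by
    have h := (intervalIntegral.intervalIntegrable_rpow' (a := 0) (b := t) hα1').comp_sub_right t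
    rw [zero_add] at h
    have h2 : t + t = 2 * t := by ring
    rw [h2] at h
    exact h.1.const_mul _
  have hg4 : IntegrableOn (fun s : ℝ => 2 * t * s ^ (-2 : ℝ)) (Set.Ioi (2 * t)) :=
    (integrableOn_Ioi_rpow_of_lt (by norm_num) (by linarith)).const_mul _
  -- integrability of F on the pieces
  have hFae : AEStronglyMeasurable F (volume : Measure ℝ) := hmF.aestronglyMeasurable
  have hFi1 : IntegrableOn F (Set.Ioc (0 : ℝ) 1) := by
    refine hg1.mono' hFae.restrict ?_
    rw [ae_restrict_iff' measurableSet_Ioc]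
    filter_upwards with s hs
    rw [Real.norm_eq_abs, abs_of_nonneg (hFnn s hs.1)]
    exact hb1 s hs
  have hFi2 : IntegrableOn F (Set.Ioc (1 : ℝ) t) := by
    refine hg2.mono' hFae.restrict ?_
    rw [ae_restrict_iff' measurableSet_Ioc]
    filter_upwards with s hs
    rw [Real.norm_eq_abs, abs_of_nonneg (hFnn s (by linarith [hs.1]))]
    exact hb2 s hs
  have hFi3 : IntegrableOn F (Set.Ioc t (2 * t)) := by
    refine hg3.mono' hFae.restrict ?_
    rw [ae_restrict_iff' measurableSet_Ioc]
    filter_upwards with s hs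
    rw [Real.norm_eq_abs, abs_of_nonneg (hFnn s (by linarith [hs.1]))]
    exact hb3 s hs
  have hFi4 : IntegrableOn F (Set.Ioi (2 * t)) := by
    refine hg4.mono' hFae.restrict ?_
    rw [ae_restrict_iff' measurableSet_Ioi]
    filter_upwards with s hs
    rw [Set.mem_Ioi] at hs
    rw [Real.norm_eq_abs, abs_of_nonneg (hFnn s (by linarith))]
    exact hb4 s hs
  -- split the integral
  have hsub1 : Set.Ioc (0 : ℝ) 1 ∪ Set.Ioc 1 t = Set.Ioc 0 t :=
    Set.Ioc_union_Ioc_eq_Ioc zero_le_one ht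
  have hsub2 : Set.Ioc (0 : ℝ) t ∪ Set.Ioc t (2 * t) = Set.Ioc 0 (2 * t) :=
    Set.Ioc_union_Ioc_eq_Ioc ht0.le (by linarith)
  have hsub3 : Set.Ioc (0 : ℝ) (2 * t) ∪ Set.Ioi (2 * t) = Set.Ioi 0 :=
    Set.Ioc_union_Ioi_eq_Ioi (by linarith)
  have hFi0t : IntegrableOn F (Set.Ioc (0 : ℝ) t) := by
    rw [← hsub1]; exact hFi1.union hFi2
  have hFi02t : IntegrableOn F (Set.Ioc (0 : ℝ) (2 * t)) := by
    rw [← hsub2]; exact hFi0t.union hFi3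
  have e1 : ∫ s in Set.Ioc (0 : ℝ) t, F s = (∫ s in Set.Ioc (0 : ℝ) 1, F s) +
      ∫ s in Set.Ioc (1 : ℝ) t, F s := by
    rw [← hsub1, setIntegral_union (Set.Ioc_disjoint_Ioc_of_le le_rfl) measurableSet_Ioc hFi1 hFi2]
  have e2 : ∫ s in Set.Ioc (0 : ℝ) (2 * t), F s = (∫ s in Set.Ioc (0 : ℝ) t, F s) +
      ∫ s in Set.Ioc t (2 * t), F s := by
    rw [← hsub2, setIntegral_union (Set.Ioc_disjoint_Ioc_of_le le_rfl) measurableSet_Ioc hFi0t hFi3]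
  have e3 : ∫ s in Set.Ioi (0 : ℝ), F s = (∫ s in Set.Ioc (0 : ℝ) (2 * t), F s) +
      ∫ s in Set.Ioi (2 * t), F s := by
    rw [← hsub3, setIntegral_union Set.Ioc_disjoint_Ioi_same measurableSet_Ioi hFi02t hFi4]
  -- bound each piece
  have p1 : ∫ s in Set.Ioc (0 : ℝ) 1, F s ≤ 1 / α := by
    calc ∫ s in Set.Ioc (0 : ℝ) 1, F s ≤ ∫ s in Set.Ioc (0 : ℝ) 1, s ^ (α - 1) :=
          setIntegral_mono_on hFi1 hg1 measurableSet_Ioc hb1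
      _ = 1 / α := by
          rw [← intervalIntegral.integral_of_le zero_le_one, integral_rpow (Or.inl hα1')]
          have h5 : α - 1 + 1 = α := by ring
          rw [h5, Real.one_rpow, Real.zero_rpow hα0.ne', sub_zero]
  have p2 : ∫ s in Set.Ioc (1 : ℝ) t, F s ≤ 2 ^ β / (c * β) := by
    have step : ∫ s in Set.Ioc (1 : ℝ) t, F s ≤
        ∫ s in Set.Ioc (1 : ℝ) t, 2 ^ β / (c * t ^ β) * s ^ (β - 1) :=
      setIntegral_mono_on hFi2 hg2 measurableSet_Ioc hb2
    refine step.trans ?_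
    rw [integral_const_mul, ← intervalIntegral.integral_of_le ht, integral_rpow (Or.inl hβ1')]
    have h5 : β - 1 + 1 = β := by ring
    rw [h5, Real.one_rpow]
    rw [div_mul_div_comm, div_le_div_iff₀ (by positivity) (by positivity)]
    nlinarith [mul_pos (mul_pos h2b hc) hβ, mul_pos hc hβ]
  have p3 : ∫ s in Set.Ioc t (2 * t), F s ≤ 1 / α := by
    have step : ∫ s in Set.Ioc t (2 * t), F s ≤
        ∫ s in Set.Ioc t (2 * t), t ^ (-α) * (s - t) ^ (α - 1) :=
      setIntegral_mono_on hFi3 hg3 measurableSet_Ioc hb3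
    refine step.trans ?_
    rw [integral_const_mul, ← intervalIntegral.integral_of_le (by linarith),
      intervalIntegral.integral_comp_sub_right (fun x => x ^ (α - 1)) t]
    have h6 : 2 * t - t = t := by ring
    rw [h6, sub_self, integral_rpow (Or.inl hα1')]
    have h5 : α - 1 + 1 = α := by ring
    rw [h5, Real.zero_rpow hα0.ne', sub_zero, Real.rpow_neg ht0.le]
    rw [← mul_div_assoc, inv_mul_cancel₀ (Real.rpow_pos_of_pos ht0 α).ne']
  have p4 : ∫ s in Set.Ioi (2 * t), F s ≤ 1 := by
    have step : ∫ s in Set.Ioi (2 * t), F s ≤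
        ∫ s in Set.Ioi (2 * t), 2 * t * s ^ (-2 : ℝ) :=
      setIntegral_mono_on hFi4 hg4 measurableSet_Ioi hb4
    refine step.trans ?_
    rw [integral_const_mul, integral_Ioi_rpow_of_lt (by norm_num) (by linarith)]
    have h5 : (-2 : ℝ) + 1 = -1 := by norm_num
    rw [h5, Real.rpow_neg_one]
    rw [div_neg, neg_div, neg_neg, div_one]
    rw [mul_inv_cancel₀ (by linarith : (2 * t : ℝ) ≠ 0)]
  rw [e3, e2, e1]
  have h7 : 2 / α = 1 / α + 1 / α := by ring
  linarith [p1, p2, p3, p4]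
end

section
/- For every α ∈ (0,1) there exists a constant C > 0 such that for all t ∈ (0,1], ∫₀^∞ | s^{α−1} − 𝟙_{{s>t}} (s−t)^{α−1} | · (s+1)^{−α} ds ≤ C. -/
open MeasureTheory Real Set

lemma aux_key {α t s : ℝ} (hα0 : 0 < α) (hα1 : α < 1) (ht : 0 < t) (ht1 : t ≤ 1)
    (hs : t + 1 < s) : (s - t) ^ (α - 1) - s ^ (α - 1) ≤ (1 - α) * (s - t) ^ (α - 2) := by
  set x := s - t with hx
  have hx1 : 1 < x := by simp only [hx]; linarith
  have hx0 : 0 < x := by linarith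
  set u := t / x with hu
  have hu0 : 0 < u := div_pos ht hx0
  have hu1 : u ≤ 1 := by rw [hu, div_le_one hx0]; linarith
  set β := 1 - α with hβ
  have hβ0 : 0 < β := by linarith
  have hβ1 : β ≤ 1 := by linarith
  have hseq : s = x * (1 + u) := by
    rw [hu, mul_add, mul_one, mul_div_assoc', mul_div_cancel_left₀ t hx0.ne', hx]; ring
  have hs_rpow : s ^ (α - 1) = x ^ (α - 1) * (1 + u) ^ (α - 1) := by
    rw [hseq, mul_rpow hx0.le (by linarith)]
  have hbern : (1 + u) ^ β ≤ 1 + β * u :=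
    rpow_one_add_le_one_add_mul_self (by linarith) hβ0.le hβ1
  have h1u : (0:ℝ) < 1 + u := by linarith
  have hkey : 1 - β * u ≤ (1 + u) ^ (α - 1) := by
    have h2 : (1 + u) ^ (α - 1) = ((1 + u) ^ β)⁻¹ := by
      rw [← rpow_neg h1u.le]; congr 1; rw [hβ]; ring
    rw [h2]
    have hpos : (0:ℝ) < (1 + u) ^ β := rpow_pos_of_pos h1u _
    have h3 : (1 + β * u)⁻¹ ≤ ((1 + u) ^ β)⁻¹ := inv_anti₀ hpos hbern
    refine le_trans ?_ h3
    rw [inv_eq_one_div, le_div_iff₀ (by positivity)]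
    nlinarith [sq_nonneg (β * u)]
  have hxa1 : (0:ℝ) < x ^ (α - 1) := rpow_pos_of_pos hx0 _
  have hmain : x ^ (α - 1) - s ^ (α - 1) ≤ x ^ (α - 1) * (β * u) := by
    rw [hs_rpow]
    nlinarith [mul_le_mul_of_nonneg_left hkey hxa1.le]
  refine hmain.trans ?_
  have heq : x ^ (α - 1) * (β * u) = β * t * x ^ (α - 2) := by
    rw [hu]
    have h4 : x ^ (α - 1) = x ^ (α - 2) * x := by
      rw [← rpow_add_one hx0.ne']; ring_nf
    rw [h4]; field_simp
  rw [heq]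
  have hxa2 : (0:ℝ) ≤ x ^ (α - 2) := (rpow_pos_of_pos hx0 _).le
  nlinarith [mul_le_mul_of_nonneg_right (mul_le_of_le_one_right hβ0.le ht1) hxa2]

/-- For `α ∈ (0,1)`, the integral
`∫₀^∞ |s^{α−1} − 𝟙_{s>t}(s−t)^{α−1}| (s+1)^{−α} ds`
is bounded uniformly in `t ∈ (0,1]`. -/
theorem kernel_integral_estimate_small_time (α : ℝ) (hα : α ∈ Set.Ioo (0 : ℝ) 1) :
    ∃ C > (0 : ℝ), ∀ t : ℝ, 0 < t → t ≤ 1 →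
      ∫ s in Set.Ioi (0 : ℝ),
          |s ^ (α - 1) - Set.indicator (Set.Ioi t) (fun s => (s - t) ^ (α - 1)) s| *
            (s + 1) ^ (-α) ≤ C := by
  obtain ⟨hα0, hα1⟩ := hα
  refine ⟨3 / α + 4, by positivity, fun t ht ht1 => ?_⟩
  set ind : ℝ → ℝ := (Set.Ioi t).indicator (fun s => (s - t) ^ (α - 1)) with hind
  set F : ℝ → ℝ := fun s => |s ^ (α - 1) - ind s| * (s + 1) ^ (-α) with hFdef
  show ∫ s in Set.Ioi (0:ℝ), F s ≤ 3 / α + 4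
  -- basic facts
  have hind_nonneg : ∀ s, 0 ≤ ind s :=
    fun s => Set.indicator_nonneg (fun x hx => rpow_nonneg (by linarith [Set.mem_Ioi.1 hx]) _) s
  have hFmeas : Measurable F := by
    rw [hFdef, hind]
    have h1 : Measurable fun s : ℝ => s ^ (α - 1) := by fun_prop
    have h2 : Measurable fun s : ℝ => (s - t) ^ (α - 1) := by fun_prop
    have h3 : Measurable fun s : ℝ => (s + 1) ^ (-α) := by fun_prop
    exact ((h1.sub (h2.indicator measurableSet_Ioi)).abs).mul h3
  have hF_nonneg : ∀ s : ℝ, 0 < s → 0 ≤ F s := fun s hs =>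
    mul_nonneg (abs_nonneg _) (rpow_nonneg (by linarith) _)
  -- majorants
  set g1 : ℝ → ℝ := fun s => s ^ (α - 1) + ind s with hg1
  set g2 : ℝ → ℝ := fun s => (4 * (1 - α)) * s ^ (α - 2) with hg2
  have hb1 : ∀ s ∈ Set.Ioc (0:ℝ) (t + 1), F s ≤ g1 s := by
    rintro s ⟨hs0, hs2⟩
    have hw : (s + 1) ^ (-α) ≤ 1 :=
      rpow_le_one_of_one_le_of_nonpos (by linarith) (by linarith)
    have habs : |s ^ (α - 1) - ind s| ≤ g1 s := by
      refine (abs_sub _ _).trans ?_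
      rw [abs_of_nonneg (rpow_nonneg hs0.le _), abs_of_nonneg (hind_nonneg s)]
    calc F s ≤ |s ^ (α - 1) - ind s| * 1 :=
          mul_le_mul_of_nonneg_left hw (abs_nonneg _)
      _ = |s ^ (α - 1) - ind s| := mul_one _
      _ ≤ g1 s := habs
  have hb2 : ∀ s ∈ Set.Ioi (t + 1), F s ≤ g2 s := by
    intro s hs
    rw [Set.mem_Ioi] at hs
    have hs0 : 0 < s := by linarith
    have hst : 0 < s - t := by linarith
    have hindeq : ind s = (s - t) ^ (α - 1) :=
      Set.indicator_of_mem (Set.mem_Ioi.2 (by linarith)) _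
    have hle : s ^ (α - 1) ≤ (s - t) ^ (α - 1) :=
      rpow_le_rpow_of_nonpos hst (by linarith) (by linarith)
    have habs : |s ^ (α - 1) - ind s| = (s - t) ^ (α - 1) - s ^ (α - 1) := by
      rw [hindeq, abs_sub_comm, abs_of_nonneg (by linarith)]
    have hw : (s + 1) ^ (-α) ≤ 1 :=
      rpow_le_one_of_one_le_of_nonpos (by linarith) (by linarith)
    have step1 : F s ≤ (s - t) ^ (α - 1) - s ^ (α - 1) := by
      calc F s ≤ |s ^ (α - 1) - ind s| * 1 :=
            mul_le_mul_of_nonneg_left hw (abs_nonneg _)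
        _ = (s - t) ^ (α - 1) - s ^ (α - 1) := by rw [mul_one, habs]
    refine step1.trans ((aux_key hα0 hα1 ht ht1 hs).trans ?_)
    -- (1-α)(s-t)^(α-2) ≤ 4(1-α) s^(α-2)
    have hhalf : s / 2 ≤ s - t := by
      rcases le_or_gt s 2 with h | h
      · linarith
      · linarith
    have h1 : (s - t) ^ (α - 2) ≤ (s / 2) ^ (α - 2) :=
      rpow_le_rpow_of_nonpos (by linarith) hhalf (by linarith)
    have h2 : (s / 2) ^ (α - 2) ≤ 4 * s ^ (α - 2) := by
      rw [div_rpow hs0.le (by norm_num), div_le_iff₀ (rpow_pos_of_pos two_pos _)]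
      have h3 : (1:ℝ) ≤ 2 ^ (α - 2) * 2 ^ (2 - α) := by
        rw [← rpow_add two_pos]; norm_num
      have h4 : (2:ℝ) ^ (2 - α) ≤ 4 := by
        calc (2:ℝ) ^ (2 - α) ≤ 2 ^ (2:ℝ) :=
              rpow_le_rpow_of_exponent_le one_le_two (by linarith)
          _ = 4 := by
              rw [show (2:ℝ) = ((2:ℕ):ℝ) from by norm_num] 
              rw [rpow_natCast]; norm_num
      have h5 : (0:ℝ) ≤ s ^ (α - 2) := rpow_nonneg hs0.le _
      nlinarith [rpow_pos_of_pos (show (0:ℝ) < 2 by norm_num) (α - 2),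
        mul_le_mul_of_nonneg_left h4 (mul_nonneg h5 (rpow_pos_of_pos two_pos (α-2)).le)]
    have h6 : (0:ℝ) ≤ 1 - α := by linarith
    calc (1 - α) * (s - t) ^ (α - 2) ≤ (1 - α) * (4 * s ^ (α - 2)) := by
          exact mul_le_mul_of_nonneg_left (h1.trans h2) h6
      _ = g2 s := by rw [hg2]; ring
  -- integrability
  have hm1 : (-1:ℝ) < α - 1 := by linarith
  have I1 : IntegrableOn (fun s : ℝ => s ^ (α - 1)) (Set.Ioc 0 (t + 1)) := by
    rw [← intervalIntegrable_iff_integrableOn_Ioc_of_le (by linarith)]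
    exact intervalIntegral.intervalIntegrable_rpow' hm1
  have I2 : IntegrableOn (fun s : ℝ => (s - t) ^ (α - 1)) (Set.Ioc t (t + 1)) := by
    have h := (intervalIntegral.intervalIntegrable_rpow' hm1 (a := 0) (b := 1)).comp_sub_right t
    rw [← intervalIntegrable_iff_integrableOn_Ioc_of_le (by linarith)]
    simpa [zero_add, add_comm] using h
  have hinter : Set.Ioc (0:ℝ) (t + 1) ∩ Set.Ioi t = Set.Ioc t (t + 1) := by
    ext x
    simp only [Set.mem_inter_iff, Set.mem_Ioc, Set.mem_Ioi]
    constructor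
    · rintro ⟨⟨_, h2⟩, h3⟩; exact ⟨h3, h2⟩
    · rintro ⟨h1, h2⟩; exact ⟨⟨ht.trans h1, h2⟩, h1⟩
  have Iind : IntegrableOn ind (Set.Ioc 0 (t + 1)) := by
    rw [hind, IntegrableOn, integrable_indicator_iff measurableSet_Ioi, IntegrableOn,
      Measure.restrict_restrict measurableSet_Ioi]
    rwa [Set.inter_comm, hinter]
  have Ig1 : IntegrableOn g1 (Set.Ioc 0 (t + 1)) := I1.add Iind
  have Ig2 : IntegrableOn g2 (Set.Ioi (t + 1)) :=
    (integrableOn_Ioi_rpow_of_lt (by linarith) (by linarith)).const_mul _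
  have IF1 : IntegrableOn F (Set.Ioc 0 (t + 1)) := by
    refine Ig1.integrable.mono hFmeas.aestronglyMeasurable.restrict ?_
    refine (ae_restrict_iff' measurableSet_Ioc).2 (ae_of_all _ fun s hs => ?_)
    rw [norm_eq_abs, norm_eq_abs, abs_of_nonneg (hF_nonneg s hs.1)]
    exact (hb1 s hs).trans (le_abs_self _)
  have IF2 : IntegrableOn F (Set.Ioi (t + 1)) := by
    refine Ig2.integrable.mono hFmeas.aestronglyMeasurable.restrict ?_
    refine (ae_restrict_iff' measurableSet_Ioi).2 (ae_of_all _ fun s hs => ?_)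
    rw [norm_eq_abs, norm_eq_abs, abs_of_nonneg (hF_nonneg s (by
      have := Set.mem_Ioi.1 hs; linarith))]
    exact (hb2 s hs).trans (le_abs_self _)
  -- split the integral
  have hunion : Set.Ioc (0:ℝ) (t + 1) ∪ Set.Ioi (t + 1) = Set.Ioi 0 :=
    Set.Ioc_union_Ioi_eq_Ioi (by linarith)
  have hdisj : Disjoint (Set.Ioc (0:ℝ) (t + 1)) (Set.Ioi (t + 1)) := by
    rw [Set.disjoint_left]
    rintro x ⟨_, h2⟩ h3
    exact absurd (Set.mem_Ioi.1 h3) (not_lt.2 h2)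
  rw [← hunion, setIntegral_union hdisj measurableSet_Ioi IF1 IF2]
  -- bound each piece
  have part1 : ∫ s in Set.Ioc (0:ℝ) (t + 1), F s ≤ 3 / α := by
    have step : ∫ s in Set.Ioc (0:ℝ) (t + 1), F s ≤ ∫ s in Set.Ioc (0:ℝ) (t + 1), g1 s :=
      setIntegral_mono_on IF1 Ig1 measurableSet_Ioc hb1
    refine step.trans ?_
    rw [hg1, integral_add I1 Iind]
    have e1 : ∫ s in Set.Ioc (0:ℝ) (t + 1), s ^ (α - 1) = (t + 1) ^ α / α := by
      rw [← intervalIntegral.integral_of_le (by linarith), integral_rpow (Or.inl hm1)]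
      rw [zero_rpow (by linarith : α - 1 + 1 ≠ 0)]
      ring_nf
    have e2 : ∫ s in Set.Ioc (0:ℝ) (t + 1), ind s = 1 / α := by
      rw [hind, setIntegral_indicator measurableSet_Ioi, hinter,
        ← intervalIntegral.integral_of_le (by linarith),
        intervalIntegral.integral_comp_sub_right (fun u => u ^ (α - 1)) t]
      simp only [sub_self, add_sub_cancel_left]
      rw [integral_rpow (Or.inl hm1), zero_rpow (by linarith : α - 1 + 1 ≠ 0)]
      rw [one_rpow]
      ring_nf
    rw [e1, e2]
    have h7 : (t + 1) ^ α ≤ 2 := by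
      calc (t + 1) ^ α ≤ 2 ^ α := rpow_le_rpow (by linarith) (by linarith) hα0.le
        _ ≤ 2 ^ (1:ℝ) := rpow_le_rpow_of_exponent_le one_le_two hα1.le
        _ = 2 := rpow_one 2
    rw [← add_div, div_le_div_iff₀ hα0 hα0]
    nlinarith
  have part2 : ∫ s in Set.Ioi (t + 1), F s ≤ 4 := by
    have step : ∫ s in Set.Ioi (t + 1), F s ≤ ∫ s in Set.Ioi (t + 1), g2 s :=
      setIntegral_mono_on IF2 Ig2 measurableSet_Ioi hb2
    refine step.trans ?_
    rw [hg2]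
    rw [integral_const_mul]
    rw [integral_Ioi_rpow_of_lt (by linarith) (by linarith : (0:ℝ) < t + 1)]
    have h8 : (t + 1) ^ (α - 2 + 1) ≤ 1 :=
      rpow_le_one_of_one_le_of_nonpos (by linarith) (by linarith)
    have h9 : (0:ℝ) ≤ (t + 1) ^ (α - 2 + 1) := rpow_nonneg (by linarith) _
    generalize hX : (t + 1) ^ (α - 2 + 1) = X at h8 h9 ⊢
    have hne : (1:ℝ) - α ≠ 0 := by linarith
    have h10 : 4 * (1 - α) * (-X / (α - 2 + 1)) = 4 * X := by
      rw [show α - 2 + 1 = -(1 - α) by ring, neg_div_neg_eq]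
      field_simp
    rw [h10]
    linarith
  linarith
end
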